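/- Let 𝒜 be a prestack on a small category 𝒰 over a commutative ring k and M an 𝒜-bimodule. Let φ be a right k-reduced normalized cochain in C̄^{p,q}(𝒜,M). If d_simp(φ) ∈ C̄^{p+1,q}(𝒜,M) is right (k+1)-reduced, then there exists a right k-reduced normalized cochain ψ ∈ C̄^{p−1,q}(𝒜,M) such that φ − d_simp(ψ) is right (k+1)-reduced. -/

import Mathlib

open CategoryTheory

universe w₁ w₂ v₁ u₁ u₂

/-- A prestack on a small category `𝒰`, with values in `k`-linear categories. The family of
categories is given by `A` together with its category/preadditive/linear instances; the prestack
structure records the restriction functors, their strict unitality, and the coherent twist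
isomorphisms `c^{u,v} : v^* u^* ≅ (uv)^*`. -/
structure Prestack (k : Type u₁) [CommRing k] (𝒰 : Type u₂) [Category.{v₁} 𝒰]
    (A : 𝒰 → Type w₁) [∀ U, Category.{w₂} (A U)] [∀ U, Preadditive (A U)]
    [∀ U, Linear k (A U)] where
  /-- restriction functor `u^* : A(U) ⥤ A(V)` for `u : V ⟶ U` -/
  res : ∀ {V U : 𝒰}, (V ⟶ U) → (A U ⥤ A V)
  res_id : ∀ U : 𝒰, res (𝟙 U) = 𝟭 (A U)
  resAdditive : ∀ {V U : 𝒰} (u : V ⟶ U), (res u).Additive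
  resLinear : ∀ {V U : 𝒰} (u : V ⟶ U), letI := resAdditive u; (res u).Linear k
  /-- the twist `c^{u,v} : v^* u^* ≅ (uv)^*`; here for `v : W ⟶ V`, `u : V ⟶ U`,
  `twist v u : res u ⋙ res v ≅ res (v ≫ u)`. -/
  twist : ∀ {W V U : 𝒰} (v : W ⟶ V) (u : V ⟶ U), res u ⋙ res v ≅ res (v ≫ u)
  twist_id_left : ∀ {V U : 𝒰} (u : V ⟶ U),
    twist (𝟙 V) u = eqToIso (by rw [res_id, Functor.comp_id, Category.id_comp])
  twist_id_right : ∀ {W V : 𝒰} (v : W ⟶ V),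
    twist v (𝟙 V) = eqToIso (by rw [res_id, Functor.id_comp, Category.comp_id])
  coherence : ∀ {T W V U : 𝒰} (w : T ⟶ W) (v : W ⟶ V) (u : V ⟶ U),
    CategoryTheory.Functor.whiskerLeft (res u) (twist w v).hom ≫ (twist (w ≫ v) u).hom =
      CategoryTheory.Functor.whiskerRight (twist v u).hom (res w) ≫ (twist w (v ≫ u)).hom ≫
        eqToHom (by rw [Category.assoc])

/-- Composable chains of morphisms in a category; `Chain C S T n` is the type of
`n`-simplices in the nerve of `C` from `S` to `T`. -/
inductive Chain (C : Type u₂) [Category.{v₁} C] : C → C → ℕ → Type (max u₂ v₁)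
  | nil (U : C) : Chain C U U 0
  | cons {S M T : C} {n : ℕ} (u : S ⟶ M) (σ : Chain C M T n) : Chain C S T (n + 1)

namespace Chain

variable {C : Type u₂} [Category.{v₁} C]

/-- the composite of a chain -/
def comp : ∀ {S T : C} {n : ℕ}, Chain C S T n → (S ⟶ T)
  | _, _, _, .nil U => 𝟙 U
  | _, _, _, .cons u (.nil _) => u
  | _, _, _, .cons u (.cons v σ) => u ≫ (Chain.cons v σ).comp

/-- cast a chain along an equality of lengths -/
def cast' {S T : C} {n m : ℕ} (h : n = m) (σ : Chain C S T n) : Chain C S T m := h ▸ σ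

@[simp] theorem comp_cast' {S T : C} {n m : ℕ} (h : n = m) (σ : Chain C S T n) :
    (σ.cast' h).comp = σ.comp := by subst h; rfl

theorem comp_cons' {S M T : C} {n : ℕ} (u : S ⟶ M) (σ : Chain C M T n) :
    (Chain.cons u σ).comp = u ≫ σ.comp := by
  cases σ <;> simp [comp]

/-- composing two adjacent maps in a chain (at position `i`, counted from the source) -/
def del : ∀ {S T : C} {n : ℕ}, Chain C S T (n + 2) → ℕ → Chain C S T (n + 1)
  | _, _, _, .cons u (.cons v (.nil _)), _ => .cons (u ≫ v) (.nil _)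
  | _, _, _, .cons u (.cons v (.cons w σ)), 0 => .cons (u ≫ v) (.cons w σ)
  | _, _, _, .cons u (.cons v (.cons w σ)), (i + 1) => .cons u (del (.cons v (.cons w σ)) i)

theorem comp_del : ∀ {S T : C} {n : ℕ} (σ : Chain C S T (n + 2)) (i : ℕ),
    (σ.del i).comp = σ.comp
  | _, _, _, .cons u (.cons v (.nil _)), _ => by simp [del, comp]
  | _, _, _, .cons u (.cons v (.cons w σ)), 0 => by
      simp [del, comp, comp_cons', Category.assoc]
  | _, _, _, .cons u (.cons v (.cons w σ)), (i + 1) => by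
      have := comp_del (.cons v (.cons w σ)) i
      simp only [del, comp_cons'] at *
      rw [this]

/-- append two chains -/
def append : ∀ {S M T : C} {n m : ℕ}, Chain C S M n → Chain C M T m → Chain C S T (n + m)
  | _, _, _, _, m, .nil _, τ => Chain.cast' (by omega) τ
  | _, _, _, _, _, .cons u σ, τ => Chain.cast' (by omega) (Chain.cons u (append σ τ))

/-- append a morphism at the target end of a chain -/
def snoc : ∀ {S M T : C} {n : ℕ}, Chain C S M n → (M ⟶ T) → Chain C S T (n + 1)
  | _, _, _, _, .nil _, f => .cons f (.nil _)
  | _, _, _, _, .cons u σ, f => .cons u (snoc σ f)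

/-- the image of a chain under a functor -/
def mapC {D : Type u₁} [Category.{w₁} D] (F : C ⥤ D) :
    ∀ {S T : C} {n : ℕ}, Chain C S T n → Chain D (F.obj S) (F.obj T) n
  | _, _, _, .nil U => .nil (F.obj U)
  | _, _, _, .cons u σ => .cons (F.map u) (mapC F σ)

/-- a chain contains an identity morphism -/
def HasId : ∀ {S T : C} {n : ℕ}, Chain C S T n → Prop
  | _, _, _, .nil _ => False
  | S, _, _, .cons (M := M) u σ => (∃ h : S = M, HEq u (𝟙 S)) ∨ σ.HasId

/-- a chain (of length `n`) is right `kk`-degenerate: it has an identity among its last `kk`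
entries, i.e. `u_i = 1` for some `n - kk + 1 ≤ i ≤ n` -/
def RightDeg : ∀ {S T : C} {n : ℕ}, Chain C S T n → ℕ → Prop
  | _, _, _, .nil _, _ => False
  | S, _, n + 1, .cons (M := M) u σ, kk => ((n + 1 ≤ kk) ∧ ∃ h : S = M, HEq u (𝟙 S)) ∨ σ.RightDeg kk

end Chain
section CoreB

open CategoryTheory

variable {k : Type u₁} [CommRing k] {𝒰 : Type u₂} [Category.{v₁} 𝒰]
  {A : 𝒰 → Type w₁} [∀ U, Category.{w₂} (A U)] [∀ U, Preadditive (A U)]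
  [∀ U, Linear k (A U)]

namespace Chain

variable (𝒜 : Prestack k 𝒰 A)

/-- `σ^⋆ = u_1^* u_2^* ⋯ u_p^*` -/
def star : ∀ {S T : 𝒰} {n : ℕ}, Chain 𝒰 S T n → (A T ⥤ A S)
  | _, _, _, .nil U => 𝟭 (A U)
  | _, _, _, .cons u σ => star σ ⋙ 𝒜.res u

/-- `σ^* = (u_p ⋯ u_2 u_1)^*` -/
def ast : ∀ {S T : 𝒰} {n : ℕ}, Chain 𝒰 S T n → (A T ⥤ A S)
  | _, _, _, .nil U => 𝟭 (A U)
  | _, _, _, .cons u σ => 𝒜.res (Chain.cons u σ).comp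

theorem res_comp_eq_ast : ∀ {S T : 𝒰} {n : ℕ} (σ : Chain 𝒰 S T n), 𝒜.res σ.comp = σ.ast 𝒜
  | _, _, _, .nil U => by simp [Chain.comp, Chain.ast, 𝒜.res_id]
  | _, _, _, .cons u σ => rfl

@[simp] theorem star_cast' {S T : 𝒰} {n m : ℕ} (h : n = m) (σ : Chain 𝒰 S T n) :
    (σ.cast' h).star 𝒜 = σ.star 𝒜 := by subst h; rfl

@[simp] theorem ast_cast' {S T : 𝒰} {n m : ℕ} (h : n = m) (σ : Chain 𝒰 S T n) :
    (σ.cast' h).ast 𝒜 = σ.ast 𝒜 := by subst h; rfl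

/-- the natural transformation `ε^{σ,i} : σ^⋆ ⟶ (∂_i σ)^⋆` obtained by twisting the
maps at positions `i, i+1` of `σ` (0-indexed from the source). -/
def eps : ∀ {S T : 𝒰} {n : ℕ} (σ : Chain 𝒰 S T (n + 2)) (i : ℕ),
    (σ.star 𝒜 ⟶ (σ.del i).star 𝒜)
  | _, _, _, .cons u (.cons v (.nil _)), _ => (𝒜.twist u v).hom
  | _, _, _, .cons u (.cons v (.cons w σ)), 0 =>
      CategoryTheory.Functor.whiskerLeft ((Chain.cons w σ).star 𝒜) (𝒜.twist u v).hom
  | _, _, _, .cons u (.cons v (.cons w σ)), (i + 1) =>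
      CategoryTheory.Functor.whiskerRight (eps (.cons v (.cons w σ)) i) (𝒜.res u)

end Chain

/-- The type of (formal) paths from `σ^⋆` to `σ^*`, for a simplex `σ` in the nerve of `𝒰`,
in the sense of Dinh Van–Lowen: a path of a 1-simplex is empty; the unique path of a
2-simplex is the twist `c^{u_1,u_2}`; a path of an `n`-simplex (`n ≥ 3`) is a path of some
`∂_i σ` together with the natural transformation `ε^{σ,i}`. -/
inductive PathD : ∀ {S T : 𝒰} {n : ℕ}, Chain 𝒰 S T (n + 1) → Type (max u₂ v₁)
  | one {S T : 𝒰} (σ : Chain 𝒰 S T 1) : PathD σ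
  | base {S T : 𝒰} (σ : Chain 𝒰 S T 2) : PathD σ
  | step {S T : 𝒰} {n : ℕ} (σ : Chain 𝒰 S T (n + 3)) (i : Fin (n + 2))
      (r : PathD (σ.del i.val)) : PathD σ

namespace PathD

/-- the sign of a path -/
def sign : ∀ {S T : 𝒰} {n : ℕ} {σ : Chain 𝒰 S T (n + 1)}, PathD σ → ℤ
  | _, _, _, _, .one _ => 1
  | _, _, _, _, .base _ => -1
  | _, _, _, _, .step _ i r => (-1) ^ (i.val + 1) * r.sign

variable (𝒜 : Prestack k 𝒰 A)

/-- the underlying composable sequence of natural transformations of a path, starting at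
`σ^⋆`, together with its endpoint (which is propositionally equal to `σ^*`). -/
def toNT : ∀ {S T : 𝒰} {n : ℕ} {σ : Chain 𝒰 S T (n + 1)}, PathD σ →
    Σ G : A T ⥤ A S, Chain (A T ⥤ A S) (σ.star 𝒜) G n
  | _, _, _, _, .one σ => ⟨σ.star 𝒜, .nil _⟩
  | _, _, _, _, .base (.cons u (.cons v (.nil _))) =>
      ⟨𝒜.res (u ≫ v), .cons (𝒜.twist u v).hom (.nil _)⟩
  | _, _, _, _, .step σ i r => ⟨(toNT r).1, .cons (σ.eps 𝒜 i.val) (toNT r).2⟩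

/-- the list of all paths of a given simplex -/
def all : ∀ {S T : 𝒰} {n : ℕ} (σ : Chain 𝒰 S T (n + 1)), List (PathD σ)
  | _, _, 0, σ => [.one σ]
  | _, _, 1, σ => [.base σ]
  | _, _, (n + 2), σ =>
      (List.finRange (n + 2)).flatMap (fun i => (all (σ.del i.val)).map (PathD.step σ i))

end PathD

end CoreB
section CoreC

open CategoryTheory

/-- An `(m,l)`-shuffle permutation, encoded as a word: `left` advances the first strand (with `m`
entries), `right` advances the second strand (with `l` entries). -/
inductive Shuffle : ℕ → ℕ → Type
  | nil : Shuffle 0 0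
  | left {m l : ℕ} (s : Shuffle m l) : Shuffle (m + 1) l
  | right {m l : ℕ} (s : Shuffle m l) : Shuffle m (l + 1)

namespace Shuffle

/-- the sign of a shuffle permutation -/
def sign : ∀ {m l : ℕ}, Shuffle m l → ℤ
  | _, _, .nil => 1
  | _, _, .left s => s.sign
  | _, _, .right (m := m) s => (-1) ^ m * s.sign

/-- all `(m,l)`-shuffles -/
def all : ∀ m l : ℕ, List (Shuffle m l)
  | 0, 0 => [.nil]
  | m + 1, 0 => (all m 0).map .left
  | 0, l + 1 => (all 0 l).map .right
  | m + 1, l + 1 => ((all m (l + 1)).map .left) ++ ((all (m + 1) l).map .right)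

end Shuffle

variable {C D E : Type*} [Category C] [Category D] [Category E]

/-- The shuffle product, with respect to evaluation of functors, of a simplex `a` in `C` and a
simplex `ρ` of natural transformations in `C ⥤ D`: a `left` step applies the current functor to
the next morphism of `a`, a `right` step evaluates the next natural transformation of `ρ` at the
current object. -/
def shEval : ∀ {m l : ℕ}, Shuffle m l → ∀ {X B : C} {F G : C ⥤ D},
    Chain C X B m → Chain (C ⥤ D) F G l → Chain D (F.obj X) (G.obj B) (m + l)
  | _, _, .nil, _, _, _, _, .nil _, .nil _ => .nil _
  | _, _, .left s, _, _, F, _, .cons f a, ρ =>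
      Chain.cast' (by omega) (Chain.cons (F.map f) (shEval s a ρ))
  | _, _, .right s, X, _, _, _, a, .cons η ρ =>
      Chain.cast' (by omega) (Chain.cons (η.app X) (shEval s a ρ))

/-- The shuffle product, with respect to composition of functors, of a simplex `ρ` of natural
transformations in `C ⥤ D` (inner) and a simplex `τ` of natural transformations in `D ⥤ E`
(outer): steps are whiskered with the current functor on the other side. -/
def shComp : ∀ {m l : ℕ}, Shuffle m l → ∀ {F F' : C ⥤ D} {G G' : D ⥤ E},
    Chain (C ⥤ D) F F' m → Chain (D ⥤ E) G G' l →
      Chain (C ⥤ E) (F ⋙ G) (F' ⋙ G') (m + l)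
  | _, _, .nil, _, _, _, _, .nil _, .nil _ => .nil _
  | _, _, .left s, _, _, G, _, .cons η ρ, τ =>
      Chain.cast' (by omega) (Chain.cons (CategoryTheory.Functor.whiskerRight η G) (shComp s ρ τ))
  | _, _, .right s, F, _, _, _, ρ, .cons θ τ =>
      Chain.cast' (by omega) (Chain.cons (CategoryTheory.Functor.whiskerLeft F θ) (shComp s ρ τ))

end CoreC
section CoreD

open CategoryTheory

variable {k : Type u₁} [CommRing k] {𝒰 : Type u₂} [Category.{v₁} 𝒰]
  {A : 𝒰 → Type w₁} [∀ U, Category.{w₂} (A U)] [∀ U, Preadditive (A U)]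
  [∀ U, Linear k (A U)]

namespace Chain

variable {C : Type u₂} [Category.{v₁} C]

/-- split off the last morphism of a chain -/
def initLast : ∀ {S T : C} {n : ℕ}, Chain C S T (n + 1) → Σ M : C, Chain C S M n × (M ⟶ T)
  | _, _, _, .cons u (.nil _) => ⟨_, .nil _, u⟩
  | _, _, _, .cons u (.cons v σ) =>
      let x := (Chain.cons v σ).initLast; ⟨x.1, .cons u x.2.1, x.2.2⟩

variable (𝒜 : Prestack k 𝒰 A)

theorem ast_del {S T : 𝒰} {n : ℕ} (σ : Chain 𝒰 S T (n + 2)) (i : ℕ) :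
    (σ.del i).ast 𝒜 = σ.ast 𝒜 := by
  rw [← res_comp_eq_ast, ← res_comp_eq_ast, comp_del]

theorem star_init : ∀ {S T : 𝒰} {n : ℕ} (σ : Chain 𝒰 S T (n + 1)),
    σ.star 𝒜 = 𝒜.res σ.initLast.2.2 ⋙ σ.initLast.2.1.star 𝒜
  | _, _, _, .cons u (.nil _) => rfl
  | _, _, _, .cons u (.cons v σ) => by
      have := star_init (Chain.cons v σ)
      simp only [initLast, star] at this ⊢
      rw [this, Functor.assoc]
      rfl

theorem comp_init : ∀ {S T : C} {n : ℕ} (σ : Chain C S T (n + 1)),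
    σ.initLast.2.1.comp ≫ σ.initLast.2.2 = σ.comp
  | _, _, _, .cons u (.nil _) => by
      change Chain.comp (Chain.nil _) ≫ u = u
      simp [comp]
  | _, _, _, .cons u (.cons v σ) => by
      have := comp_init (Chain.cons v σ)
      change (Chain.cons u (Chain.cons v σ).initLast.2.1).comp ≫ (Chain.cons v σ).initLast.2.2 = _
      rw [comp_cons' u, Category.assoc, this, comp_cons' u]

end Chain

theorem PathD.end_eq (𝒜 : Prestack k 𝒰 A) :
    ∀ {S T : 𝒰} {n : ℕ} {σ : Chain 𝒰 S T (n + 1)} (r : PathD σ),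
      (r.toNT 𝒜).1 = 𝒜.res σ.comp
  | _, _, _, _, .one (.cons u (.nil _)) => rfl
  | _, _, _, _, .base (.cons u (.cons v (.nil _))) => rfl
  | _, _, _, _, .step σ i r => by
      rw [show ((PathD.step σ i r).toNT 𝒜).1 = (r.toNT 𝒜).1 from rfl, PathD.end_eq 𝒜 r,
        Chain.comp_del]

/-- A bimodule over a prestack `𝒜`. -/
structure Bimodule (𝒜 : Prestack k 𝒰 A) where
  /-- the value `M^U(X, Y)` -/
  val : ∀ (U : 𝒰), A U → A U → Type w₂
  addCommGroup : ∀ U X Y, AddCommGroup (val U X Y)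
  module : ∀ U X Y, letI := addCommGroup U X Y; Module k (val U X Y)
  /-- left action: composition with a morphism on the target side -/
  actL : ∀ {U : 𝒰} {X Y Y' : A U}, (Y ⟶ Y') → val U X Y → val U X Y'
  /-- right action: composition with a morphism on the source side -/
  actR : ∀ {U : 𝒰} {X X' Y : A U}, val U X Y → (X' ⟶ X) → val U X' Y
  /-- restriction map `M^u : M^U(X,Y) → M^V(u^*X, u^*Y)` -/
  rst : ∀ {V U : 𝒰} (u : V ⟶ U) {X Y : A U}, val U X Y →
    val V ((𝒜.res u).obj X) ((𝒜.res u).obj Y)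
  actL_id : ∀ {U : 𝒰} {X Y : A U} (x : val U X Y), actL (𝟙 Y) x = x
  actL_actL : ∀ {U : 𝒰} {X Y Y' Y'' : A U} (f : Y ⟶ Y') (g : Y' ⟶ Y'') (x : val U X Y),
    actL g (actL f x) = actL (f ≫ g) x
  actR_id : ∀ {U : 𝒰} {X Y : A U} (x : val U X Y), actR x (𝟙 X) = x
  actR_actR : ∀ {U : 𝒰} {X X' X'' Y : A U} (f : X' ⟶ X) (g : X'' ⟶ X') (x : val U X Y),
    actR (actR x f) g = actR x (g ≫ f)
  actL_actR : ∀ {U : 𝒰} {X X' Y Y' : A U} (f : X' ⟶ X) (g : Y ⟶ Y') (x : val U X Y),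
    actL g (actR x f) = actR (actL g x) f
  actL_add : ∀ {U : 𝒰} {X Y Y' : A U} (g : Y ⟶ Y') (x y : val U X Y),
    letI := addCommGroup U X Y; letI := addCommGroup U X Y';
    actL g (x + y) = actL g x + actL g y
  add_actL : ∀ {U : 𝒰} {X Y Y' : A U} (g g' : Y ⟶ Y') (x : val U X Y),
    letI := addCommGroup U X Y';
    actL (g + g') x = actL g x + actL g' x
  actR_add : ∀ {U : 𝒰} {X X' Y : A U} (f : X' ⟶ X) (x y : val U X Y),
    letI := addCommGroup U X Y; letI := addCommGroup U X' Y;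
    actR (x + y) f = actR x f + actR y f
  add_actR : ∀ {U : 𝒰} {X X' Y : A U} (f f' : X' ⟶ X) (x : val U X Y),
    letI := addCommGroup U X' Y;
    actR x (f + f') = actR x f + actR x f'
  actL_smul : ∀ {U : 𝒰} {X Y Y' : A U} (c : k) (g : Y ⟶ Y') (x : val U X Y),
    letI := addCommGroup U X Y; letI := addCommGroup U X Y';
    letI := module U X Y; letI := module U X Y';
    actL g (c • x) = c • actL g x
  actR_smul : ∀ {U : 𝒰} {X X' Y : A U} (c : k) (f : X' ⟶ X) (x : val U X Y),
    letI := addCommGroup U X Y; letI := addCommGroup U X' Y;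
    letI := module U X Y; letI := module U X' Y;
    actR (c • x) f = c • actR x f
  rst_add : ∀ {V U : 𝒰} (u : V ⟶ U) {X Y : A U} (x y : val U X Y),
    letI := addCommGroup U X Y;
    letI := addCommGroup V ((𝒜.res u).obj X) ((𝒜.res u).obj Y);
    rst u (x + y) = rst u x + rst u y
  rst_actL : ∀ {V U : 𝒰} (u : V ⟶ U) {X Y Y' : A U} (g : Y ⟶ Y') (x : val U X Y),
    rst u (actL g x) = actL ((𝒜.res u).map g) (rst u x)
  rst_actR : ∀ {V U : 𝒰} (u : V ⟶ U) {X X' Y : A U} (f : X' ⟶ X) (x : val U X Y),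
    rst u (actR x f) = actR (rst u x) ((𝒜.res u).map f)
  rst_id : ∀ {U : 𝒰} {X Y : A U} (x : val U X Y), HEq (rst (𝟙 U) x) x
  rst_comp : ∀ {W V U : 𝒰} (v : W ⟶ V) (u : V ⟶ U) {X Y : A U} (x : val U X Y),
    rst (v ≫ u) x =
      actL ((𝒜.twist v u).hom.app Y) (actR (rst v (rst u x)) ((𝒜.twist v u).inv.app X))

attribute [instance] Bimodule.addCommGroup Bimodule.module

namespace Bimodule

variable {𝒜 : Prestack k 𝒰 A} (M : Bimodule 𝒜)

/-- transport a bimodule value along equalities of objects -/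
def castV {U : 𝒰} {X X' Y Y' : A U} (h₁ : X = X') (h₂ : Y = Y') (x : M.val U X Y) :
    M.val U X' Y' := h₁ ▸ h₂ ▸ x

end Bimodule

variable (𝒜 : Prestack k 𝒰 A) (M : Bimodule 𝒜)

/-- the component of the Gerstenhaber–Schack double object for a fixed simplex `σ`:
functions sending `q`-simplices of arguments in `A T` to values of `M`. -/
def CSigma {S T : 𝒰} {p : ℕ} (σ : Chain 𝒰 S T p) (q : ℕ) : Type _ :=
  ∀ (X Y : A T) (_ : Chain (A T) X Y q), M.val S ((σ.star 𝒜).obj X) ((σ.ast 𝒜).obj Y)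

/-- the Gerstenhaber–Schack double object `𝐂^{p,q}(𝒜, M)` -/
def Cpq (p q : ℕ) : Type _ :=
  ∀ (S T : 𝒰) (σ : Chain 𝒰 S T p), CSigma 𝒜 M σ q

instance {S T : 𝒰} {p : ℕ} (σ : Chain 𝒰 S T p) (q : ℕ) :
    AddCommGroup (CSigma 𝒜 M σ q) := by unfold CSigma; infer_instance

instance (p q : ℕ) : AddCommGroup (Cpq 𝒜 M p q) := by unfold Cpq; infer_instance

/-- the total Gerstenhaber–Schack object `𝐂ⁿ_GS(𝒜,M) = ∏_{p+q=n} 𝐂^{p,q}(𝒜,M)` -/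
def CGS (n : ℕ) : Type _ := ∀ pq : {x : ℕ × ℕ // x.1 + x.2 = n}, Cpq 𝒜 M pq.1.1 pq.1.2

instance (n : ℕ) : AddCommGroup (CGS 𝒜 M n) := by unfold CGS; infer_instance

/-- the Hochschild differential, on the `σ`-component -/
def dHochS {S T : 𝒰} {p : ℕ} (σ : Chain 𝒰 S T p) {q : ℕ} (φ : CSigma 𝒜 M σ q) :
    CSigma 𝒜 M σ (q + 1) := fun X Y a =>
  match a with
  | .cons f a' =>
      (M.actL ((σ.ast 𝒜).map (Chain.cons f a').initLast.2.2)
          (φ X (Chain.cons f a').initLast.1 (Chain.cons f a').initLast.2.1))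
      + (∑ j : Fin q, ((-1 : ℤ) ^ (q - j.val)) •
          φ X Y (Chain.cast' (show q - 1 + 1 = q by have := j.isLt; omega)
            ((Chain.cast' (show q + 1 = q - 1 + 2 by have := j.isLt; omega)
              (Chain.cons f a')).del j.val)))
      + ((-1 : ℤ) ^ (q + 1)) • M.actR (φ _ Y a') ((σ.star 𝒜).map f)

/-- the Hochschild differential `𝐂^{p,q} → 𝐂^{p,q+1}` -/
def dHoch {p q : ℕ} (φ : Cpq 𝒜 M p q) : Cpq 𝒜 M p (q + 1) :=
  fun S T σ => dHochS 𝒜 M σ (φ S T σ)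

/-- the (twisted) simplicial differential `𝐂^{p,q} → 𝐂^{p+1,q}` -/
def dSimp {p q : ℕ} (φ : Cpq 𝒜 M p q) : Cpq 𝒜 M (p + 1) q := fun S T σ X Y a =>
  match σ with
  | .cons u σ' =>
      -- i = 0 : `c^{σ,1} M^{u_1} φ^{∂_0 σ}(a)`
      let t0 : M.val S (((Chain.cons u σ').star 𝒜).obj X) (((Chain.cons u σ').ast 𝒜).obj Y) :=
        M.castV
          (rfl :
            (𝒜.res u).obj ((σ'.star 𝒜).obj X) = ((Chain.cons u σ').star 𝒜).obj X)
          ((congrArg (fun f => (𝒜.res f).obj Y) (Chain.comp_cons' u σ').symm :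
            (𝒜.res (u ≫ σ'.comp)).obj Y = ((Chain.cons u σ').ast 𝒜).obj Y))
          (M.actL ((𝒜.twist u σ'.comp).hom.app Y)
            (M.castV rfl
              ((congrArg (fun F => (𝒜.res u).obj (F.obj Y))
                  (Chain.res_comp_eq_ast 𝒜 σ').symm :
                (𝒜.res u).obj ((σ'.ast 𝒜).obj Y) = (𝒜.res σ'.comp ⋙ 𝒜.res u).obj Y))
              (M.rst u (φ _ T σ' X Y a))))
      -- 1 ≤ i ≤ p : `(-1)^i φ^{∂_i σ}(a) ∘ ε^{σ,i}`
      let t1 : M.val S (((Chain.cons u σ').star 𝒜).obj X) (((Chain.cons u σ').ast 𝒜).obj Y) :=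
        ∑ j : Fin p,
          let h1 : p + 1 = p - 1 + 2 := by have := j.isLt; omega
          let h2 : p - 1 + 1 = p := by have := j.isLt; omega
          let σc := Chain.cast' h1 (Chain.cons u σ')
          let σd := Chain.cast' h2 (σc.del j.val)
          ((-1 : ℤ) ^ (j.val + 1)) •
            (M.castV
              ((congrArg (fun F => F.obj X) (Chain.star_cast' 𝒜 h1 (Chain.cons u σ')) :
                (σc.star 𝒜).obj X = ((Chain.cons u σ').star 𝒜).obj X))
              ((congrArg (fun F => F.obj Y)
                  (show σd.ast 𝒜 = (Chain.cons u σ').ast 𝒜 by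
                    rw [Chain.ast_cast', Chain.ast_del, Chain.ast_cast']) :
                (σd.ast 𝒜).obj Y = ((Chain.cons u σ').ast 𝒜).obj Y))
              (M.actR (φ S T σd X Y a)
                ((σc.eps 𝒜 j.val).app X ≫
                  eqToHom ((congrArg (fun F => F.obj X)
                    (Chain.star_cast' 𝒜 h2 (σc.del j.val))).symm))))
      -- i = p+1 : `(-1)^{p+1} c^{σ,p} φ^{∂_{p+1} σ}(u_{p+1}^* a)`
      let t2 : M.val S (((Chain.cons u σ').star 𝒜).obj X) (((Chain.cons u σ').ast 𝒜).obj Y) :=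
        ((-1 : ℤ) ^ (p + 1)) •
          (M.castV
            ((Functor.congr_obj (Chain.star_init 𝒜 (Chain.cons u σ')) X).symm :
              ((𝒜.res (Chain.cons u σ').initLast.2.2 ⋙
                (Chain.cons u σ').initLast.2.1.star 𝒜).obj X) =
                ((Chain.cons u σ').star 𝒜).obj X)
            ((congrArg (fun f => (𝒜.res f).obj Y) (Chain.comp_init (Chain.cons u σ')) :
              (𝒜.res ((Chain.cons u σ').initLast.2.1.comp ≫
                (Chain.cons u σ').initLast.2.2)).obj Y = ((Chain.cons u σ').ast 𝒜).obj Y))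
            (M.actL
              ((𝒜.twist (Chain.cons u σ').initLast.2.1.comp
                  (Chain.cons u σ').initLast.2.2).hom.app Y)
              (M.castV rfl
                ((congrArg (fun F =>
                    F.obj ((𝒜.res (Chain.cons u σ').initLast.2.2).obj Y))
                    (Chain.res_comp_eq_ast 𝒜 (Chain.cons u σ').initLast.2.1).symm :
                  ((Chain.cons u σ').initLast.2.1.ast 𝒜).obj
                      ((𝒜.res (Chain.cons u σ').initLast.2.2).obj Y) =
                    (𝒜.res (Chain.cons u σ').initLast.2.2 ⋙
                      𝒜.res (Chain.cons u σ').initLast.2.1.comp).obj Y))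
                (φ S _ (Chain.cons u σ').initLast.2.1 _ _
                  (a.mapC (𝒜.res (Chain.cons u σ').initLast.2.2))))))
      t0 + t1 + t2

end CoreD
section CoreE

open CategoryTheory

variable {k : Type u₁} [CommRing k] {𝒰 : Type u₂} [Category.{v₁} 𝒰]
  {A : 𝒰 → Type w₁} [∀ U, Category.{w₂} (A U)] [∀ U, Preadditive (A U)]
  [∀ U, Linear k (A U)]

/-- a splitting of a simplex `σ` into a prefix `L_p σ` and a suffix `R_p σ`, together with
the relations between the corresponding functors. -/
structure Split (𝒜 : Prestack k 𝒰 A) {S T : 𝒰} {n : ℕ} (σ : Chain 𝒰 S T n) where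
  p : ℕ
  j : ℕ
  hpj : p + j = n
  W : 𝒰
  pre : Chain 𝒰 S W p
  suf : Chain 𝒰 W T j
  hstar : σ.star 𝒜 = suf.star 𝒜 ⋙ pre.star 𝒜
  hcomp : pre.comp ≫ suf.comp = σ.comp

namespace Chain

variable (𝒜 : Prestack k 𝒰 A)

/-- the list of all splittings of a simplex -/
def splits : ∀ {S T : 𝒰} {n : ℕ} (σ : Chain 𝒰 S T n), List (Split 𝒜 σ)
  | _, _, _, .nil U =>
      [⟨0, 0, rfl, U, .nil U, .nil U, rfl, by simp [Chain.comp]⟩]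
  | S, T, _, .cons (n := m) u ρ =>
      ⟨0, m + 1, by omega, S, .nil S, .cons u ρ, rfl, by
        simp [Chain.comp]⟩ ::
      (splits ρ).map (fun s =>
        ⟨s.p + 1, s.j, by have := s.hpj; omega, s.W, .cons u s.pre, s.suf, by
          have := s.hstar
          simp only [Chain.star] at this ⊢
          rw [this, Functor.assoc], by
          have := s.hcomp
          rw [Chain.comp_cons', Chain.comp_cons', Category.assoc, this]⟩)

end Chain

variable (𝒜 : Prestack k 𝒰 A) (M : Bimodule 𝒜)

/-- The term of the higher differential component `d_j` (`j = s.j ≥ 2`) corresponding to a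
splitting `s` of the target simplex `σ`: the sum over all paths `r` of `R_p σ` and all
shuffles `β` of the arguments with the path components (evaluated at objects) of
`(-1)^r (-1)^β (-1)^Q c^{σ,p} φ^{L_p σ}(β(a,r))`. -/
def higherTerm {n : ℕ} (φ : CGS 𝒜 M n) {P Q : ℕ} (hPQ : P + Q = n + 1)
    {S T : 𝒰} (σ : Chain 𝒰 S T P) (s : Split 𝒜 σ) {X Y : A T}
    (a : Chain (A T) X Y Q) (h2 : 2 ≤ s.j) :
    M.val S ((σ.star 𝒜).obj X) ((σ.ast 𝒜).obj Y) :=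
  let sufc := Chain.cast' (show s.j = s.j - 2 + 1 + 1 by omega) s.suf
  (((PathD.all sufc).map fun r =>
      (((Shuffle.all Q (s.j - 2 + 1)).map fun β =>
          let φv := φ ⟨(s.p, Q + (s.j - 2) + 1), by have := s.hpj; omega⟩ S s.W s.pre
            ((sufc.star 𝒜).obj X) ((r.toNT 𝒜).1.obj Y) (shEval β a (r.toNT 𝒜).2)
          (r.sign * β.sign * (-1 : ℤ) ^ Q) •
            M.castV
              (show (s.pre.star 𝒜).obj ((sufc.star 𝒜).obj X) = (σ.star 𝒜).obj X by
                rw [Chain.star_cast', s.hstar]; try rfl)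
              (show (𝒜.res (s.pre.comp ≫ sufc.comp)).obj Y = (σ.ast 𝒜).obj Y by
                rw [Chain.comp_cast', s.hcomp, Chain.res_comp_eq_ast]; try rfl)
              (M.actL ((𝒜.twist s.pre.comp sufc.comp).hom.app Y)
                (M.castV rfl
                  (show (s.pre.ast 𝒜).obj ((r.toNT 𝒜).1.obj Y) =
                      (𝒜.res sufc.comp ⋙ 𝒜.res s.pre.comp).obj Y by
                    rw [← Chain.res_comp_eq_ast, PathD.end_eq 𝒜 r]; try rfl)
                  φv))).sum)).sum)

/-- The Gerstenhaber–Schack differential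
`d = d_0 + d_1 + ⋯ : 𝐂ⁿ_GS(𝒜,M) → 𝐂ⁿ⁺¹_GS(𝒜,M)`, where `d_0 = d_Hoch` is the Hochschild
differential, `d_1 = (-1)^{n+1} d_simp` is the twisted simplicial differential, and the higher
components `d_j` (`j ≥ 2`) are given by `higherTerm` via paths and shuffles. -/
def dGSHoch (n : ℕ) (φ : CGS 𝒜 M n) : ∀ (P Q : ℕ), P + Q = n + 1 → Cpq 𝒜 M P Q
  | _, 0, _ => 0
  | P, (Q' + 1), h => fun S T σ => dHochS 𝒜 M σ (φ ⟨(P, Q'), by omega⟩ S T σ)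

def dGSSimp (n : ℕ) (φ : CGS 𝒜 M n) : ∀ (P Q : ℕ), P + Q = n + 1 → Cpq 𝒜 M P Q
  | 0, _, _ => 0
  | (P' + 1), Q, h => ((-1 : ℤ) ^ (n + 1)) • dSimp 𝒜 M (φ ⟨(P', Q), by omega⟩)

def dGS (n : ℕ) (φ : CGS 𝒜 M n) : CGS 𝒜 M (n + 1) := fun pq S T σ X Y a =>
  -- d₀ = d_Hoch
  dGSHoch 𝒜 M n φ pq.1.1 pq.1.2 pq.2 S T σ X Y a
  -- d₁ = (-1)ⁿ⁺¹ d_simp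
  + dGSSimp 𝒜 M n φ pq.1.1 pq.1.2 pq.2 S T σ X Y a
  -- d_j for j ≥ 2, via paths and shuffles
  + (((σ.splits 𝒜).map (fun s =>
      if h2 : 2 ≤ s.j then higherTerm 𝒜 M φ pq.2 σ s a h2 else 0)).sum)

end CoreE
section CoreF

open CategoryTheory

variable {k : Type u₁} [CommRing k] {𝒰 : Type u₂} [Category.{v₁} 𝒰]
  {A : 𝒰 → Type w₁} [∀ U, Category.{w₂} (A U)] [∀ U, Preadditive (A U)]
  [∀ U, Linear k (A U)]

variable (𝒜 : Prestack k 𝒰 A) (M : Bimodule 𝒜)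

/-- a cochain component is normalized if it vanishes on argument tuples containing an identity -/
def Normalized {p q : ℕ} (φ : Cpq 𝒜 M p q) : Prop :=
  ∀ (S T : 𝒰) (σ : Chain 𝒰 S T p) (X Y : A T) (a : Chain (A T) X Y q),
    a.HasId → φ S T σ X Y a = 0

/-- a total cochain is normalized -/
def NormalizedGS {n : ℕ} (φ : CGS 𝒜 M n) : Prop := ∀ pq, Normalized 𝒜 M (φ pq)

/-- a cochain component vanishes on right `kk`-degenerate simplices -/
def RightReduced (kk : ℕ) {p q : ℕ} (φ : Cpq 𝒜 M p q) : Prop :=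
  ∀ (S T : 𝒰) (σ : Chain 𝒰 S T p), σ.RightDeg kk →
    ∀ (X Y : A T) (a : Chain (A T) X Y q), φ S T σ X Y a = 0

/-- a total cochain vanishes on right `kk`-degenerate simplices -/
def RightReducedGS (kk : ℕ) {n : ℕ} (φ : CGS 𝒜 M n) : Prop :=
  ∀ pq, RightReduced 𝒜 M kk (φ pq)

/-- a cochain component is reduced: it vanishes on degenerate simplices -/
def Reduced {p q : ℕ} (φ : Cpq 𝒜 M p q) : Prop :=
  ∀ (S T : 𝒰) (σ : Chain 𝒰 S T p), σ.HasId →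
    ∀ (X Y : A T) (a : Chain (A T) X Y q), φ S T σ X Y a = 0

/-- a total cochain is reduced -/
def ReducedGS {n : ℕ} (φ : CGS 𝒜 M n) : Prop := ∀ pq, Reduced 𝒜 M (φ pq)

/-- membership in the filtration `F^j`: the components over simplices of dimension `≤ j`
are normalized -/
def NormalizedUpTo (j : ℕ) {n : ℕ} (φ : CGS 𝒜 M n) : Prop :=
  ∀ pq : {x : ℕ × ℕ // x.1 + x.2 = n}, pq.1.1 ≤ j → Normalized 𝒜 M (φ pq)

/-- The cohomology of the subcomplex of the Gerstenhaber–Schack complex cut out by the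
predicate `P` (as a bare quotient set: cocycles satisfying `P` modulo differentials of
cochains satisfying `P`). -/
def GSCohomology (P : ∀ n : ℕ, CGS 𝒜 M n → Prop) (n : ℕ) : Type _ :=
  Quot (fun (x y : {φ : CGS 𝒜 M n // P n φ ∧ dGS 𝒜 M n φ = 0}) =>
    ∃ (m : ℕ) (h : m + 1 = n) (ψ : CGS 𝒜 M m), P m ψ ∧ x.1 = y.1 + h ▸ dGS 𝒜 M m ψ)

/-- The statement that the inclusion of the subcomplex of the Gerstenhaber–Schack complex cut
out by `P'` into the one cut out by `P` is a quasi-isomorphism: the canonical map induced by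
the inclusion on cohomology is bijective in every degree. -/
def InclusionQuasiIso (P' P : ∀ n : ℕ, CGS 𝒜 M n → Prop) : Prop :=
  ∀ n : ℕ, ∃ F : GSCohomology 𝒜 M P' n → GSCohomology 𝒜 M P n,
    Function.Bijective F ∧
      ∀ (z : {φ : CGS 𝒜 M n // P' n φ ∧ dGS 𝒜 M n φ = 0})
        (w : {φ : CGS 𝒜 M n // P n φ ∧ dGS 𝒜 M n φ = 0}),
        z.1 = w.1 → F (Quot.mk _ z) = Quot.mk _ w

end CoreF

/-!
Let `s τ` be `τ` with an identity inserted so that exactly `k` entries follow it, and put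
`ψ^τ = ± φ^{s τ}`. As `φ` is right `k`-reduced, so is `ψ`, and `d_simp` preserves right
`k`-reducedness: at a simplex with an identity among its last `k` entries, the two faces through
that identity cancel and every other face keeps an identity among its last `k` entries. So on a
right `(k+1)`-degenerate simplex `σ` only the case where the identity of `σ` is followed by
exactly `k` entries remains. There the simplicial identities match the faces of `ψ` at `σ` with
the faces of `φ` at `σ` with a second identity inserted next to the first, which add up to
`(d_simp φ)^{s σ} = 0`, except for the face through the identity of `σ`, which contributes
`φ^σ`. Hence `φ - d_simp ψ` vanishes at `σ`. When `k > p`, every degenerate simplex is right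
`k`-degenerate and `ψ = 0` works.
-/

namespace Chain

variable {C : Type u₂} [Category.{v₁} C]

def IsId {S T : C} (u : S ⟶ T) : Prop := ∃ _ : S = T, HEq u (𝟙 S)

theorem isId_id (S : C) : IsId (𝟙 S) := ⟨rfl, HEq.rfl⟩

/-- `σ.insId m` inserts an identity after the first `m` entries of `σ` (at the end if `m`
exceeds the length of `σ`). -/
def insId : ∀ {S T : C} {n : ℕ}, Chain C S T n → ℕ → Chain C S T (n + 1)
  | _, _, _, σ, 0 => .cons (𝟙 _) σ
  | _, _, _, .nil U, _ + 1 => .cons (𝟙 U) (.nil U)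
  | _, _, _, .cons u ρ, m + 1 => .cons u (insId ρ m)

/-- `σ.IdAt c`: the entry of `σ` that is followed by exactly `c - 1` further entries is an
identity. Counting from the target end matches `RightDeg`: `σ.RightDeg K` says that `σ.IdAt c`
for some `c ≤ K`. -/
def IdAt : ∀ {S T : C} {n : ℕ}, Chain C S T n → ℕ → Prop
  | _, _, _, .nil _, _ => False
  | _, _, _, .cons (n := n) u ρ, c => (n + 1 = c ∧ IsId u) ∨ IdAt ρ c

def MergesId : ∀ {S T : C} {n : ℕ}, Chain C S T (n + 2) → ℕ → Prop
  | _, _, _, .cons u (.cons v (.nil _)), _ => IsId u ∨ IsId v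
  | _, _, _, .cons u (.cons v (.cons _ _)), 0 => IsId u ∨ IsId v
  | _, _, _, .cons _ (.cons v (.cons w σ)), i + 1 => MergesId (.cons v (.cons w σ)) i

theorem insId_zero {S T : C} {n : ℕ} (σ : Chain C S T n) : σ.insId 0 = cons (𝟙 S) σ := by
  cases σ <;> rfl

theorem del_zero {S M₁ M₂ T : C} {n : ℕ} (u : S ⟶ M₁) (v : M₁ ⟶ M₂) (ρ : Chain C M₂ T n) :
    (cons u (cons v ρ)).del 0 = cons (u ≫ v) ρ := by
  cases ρ <;> rfl

theorem del_cons_succ {S M T : C} {n : ℕ} (u : S ⟶ M) (τ : Chain C M T (n + 2)) (i : ℕ) :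
    (cons u τ).del (i + 1) = cons u (τ.del i) := by
  match τ with
  | .cons _ (.cons _ _) => rfl

theorem initLast_cons {S M T : C} {n : ℕ} (u : S ⟶ M) (τ : Chain C M T (n + 1)) :
    (cons u τ).initLast = ⟨τ.initLast.1, cons u τ.initLast.2.1, τ.initLast.2.2⟩ := by
  match τ with
  | .cons _ _ => rfl

theorem cons_hcongr {S M T T' : C} (hT : T = T') (u : S ⟶ M) {n : ℕ}
    {σ : Chain C M T n} {σ' : Chain C M T' n} (h : HEq σ σ') : HEq (cons u σ) (cons u σ') := by
  subst hT
  rw [eq_of_heq h]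

theorem mapC_id {X Y : C} {n : ℕ} (a : Chain C X Y n) : a.mapC (𝟭 C) = a := by
  induction a with
  | nil => rfl
  | cons f a ih =>
    change cons f (a.mapC (𝟭 C)) = _
    rw [ih]

theorem comp_insId : ∀ {S T : C} {n : ℕ} (σ : Chain C S T n) (m : ℕ),
    (σ.insId m).comp = σ.comp
  | _, _, _, .nil _, 0 | _, _, _, .nil _, _ + 1 => rfl
  | _, _, _, .cons u ρ, 0 => by rw [insId_zero, comp_cons', Category.id_comp]
  | _, _, _, .cons u ρ, m + 1 => by
      change (cons u (ρ.insId m)).comp = _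
      rw [comp_cons', comp_insId ρ m, comp_cons']

theorem del_insId_succ : ∀ {n : ℕ} {S T : C} (σ : Chain C S T (n + 1)) (m : ℕ),
    m ≤ n → (σ.insId (m + 1)).del m = σ
  | 0, _, _, .cons u (.nil _), 0, _ => by
      change (cons u (cons (𝟙 _) (nil _))).del 0 = _
      rw [del_zero, Category.comp_id]
  | _ + 1, _, _, .cons u ρ, 0, _ => by
      change (cons u (ρ.insId 0)).del 0 = _
      rw [insId_zero, del_zero, Category.comp_id]
  | _ + 1, _, _, .cons u ρ, m + 1, hm => by
      change (cons u (ρ.insId (m + 1))).del (m + 1) = _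
      rw [del_cons_succ, del_insId_succ ρ m (by omega)]

theorem del_insId_self : ∀ {n : ℕ} {S T : C} (σ : Chain C S T (n + 1)) (m : ℕ),
    m ≤ n → (σ.insId m).del m = σ
  | _, _, _, .cons u ρ, 0, _ => by
      change (cons (𝟙 _) (cons u ρ)).del 0 = _
      rw [del_zero, Category.id_comp]
  | _ + 1, _, _, .cons u ρ, m + 1, hm => by
      change (cons u (ρ.insId m)).del (m + 1) = _
      rw [del_cons_succ, del_insId_self ρ m (by omega)]

theorem del_insId_of_lt : ∀ {d n : ℕ} {S T : C} (σ : Chain C S T (n + 2)) (m : ℕ),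
    d < m → m ≤ n + 1 → (σ.insId (m + 1)).del d = (σ.del d).insId m
  | 0, _, _, _, .cons u (.cons v ρ), m + 1, _, _ => by
      change (cons u (cons v (ρ.insId m))).del 0 = _
      rw [del_zero, del_zero]
      rfl
  | d + 1, n + 1, _, _, .cons u τ, m + 1, hd, hm => by
      change (cons u (τ.insId (m + 1))).del (d + 1) = _
      rw [del_cons_succ, del_cons_succ, del_insId_of_lt τ m (by omega) (by omega)]
      rfl
  | _, _, _, _, _, 0, hd, _ | _ + 1, 0, _, _, _, _ + 1, hd, _ => by omega

namespace IdAt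

theorem one_le {S T : C} {n : ℕ} {σ : Chain C S T n} {c : ℕ} (h : σ.IdAt c) : 1 ≤ c := by
  induction σ with
  | nil => exact h.elim
  | cons u ρ ih => rcases h with ⟨rfl, _⟩ | h; exacts [by omega, ih h]

theorem le_length {S T : C} {n : ℕ} {σ : Chain C S T n} {c : ℕ} (h : σ.IdAt c) : c ≤ n := by
  induction σ with
  | nil => exact h.elim
  | cons u ρ ih => rcases h with ⟨rfl, _⟩ | h; exacts [le_rfl, (ih h).trans (Nat.le_succ _)]

theorem rightDeg {S T : C} {n : ℕ} {σ : Chain C S T n} {c K : ℕ} (h : σ.IdAt c)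
    (hK : c ≤ K) : σ.RightDeg K := by
  induction σ with
  | nil => exact h.elim
  | cons u ρ ih =>
    rcases h with ⟨rfl, hu⟩ | h
    exacts [Or.inl ⟨hK, hu⟩, Or.inr (ih h)]

theorem of_cons {S M T : C} {n : ℕ} {u : S ⟶ M} {ρ : Chain C M T n} {c : ℕ}
    (h : (cons u ρ).IdAt c) (hc : c ≤ n) : ρ.IdAt c := by
  rcases h with ⟨rfl, _⟩ | h
  exacts [absurd hc (by omega), h]

theorem insId {S T : C} {n : ℕ} {σ : Chain C S T n} {c : ℕ} (h : σ.IdAt c) (m : ℕ)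
    (hm : m + c ≤ n) : (σ.insId m).IdAt c := by
  induction σ generalizing m with
  | nil => exact h.elim
  | cons u ρ ih =>
    cases m with
    | zero => exact Or.inr h
    | succ m =>
      rcases h with ⟨rfl, _⟩ | h
      exacts [absurd hm (by omega), Or.inr (ih h m (by omega))]

theorem initLast {n : ℕ} {S T : C} {σ : Chain C S T (n + 1)} {c : ℕ} (h : σ.IdAt (c + 2)) :
    σ.initLast.2.1.IdAt (c + 1) := by
  induction n generalizing S with
  | zero =>
    match σ, h with
    | .cons u (.nil _), h => rcases h with ⟨h1, _⟩ | h; exacts [absurd h1 (by omega), h.elim]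
  | succ n ih =>
    match σ, h with
    | .cons u ρ, h =>
      rw [initLast_cons]
      rcases h with ⟨h1, hu⟩ | h
      exacts [Or.inl ⟨by omega, hu⟩, Or.inr (ih h)]

theorem isId_last {n : ℕ} {S T : C} {σ : Chain C S T (n + 1)} (h : σ.IdAt 1) :
    IsId σ.initLast.2.2 := by
  induction n generalizing S with
  | zero =>
    match σ, h with
    | .cons u (.nil _), h => rcases h with ⟨_, hu⟩ | h; exacts [hu, h.elim]
  | succ n ih =>
    match σ, h with
    | .cons u ρ, h =>
      rw [initLast_cons]
      rcases h with ⟨h1, _⟩ | h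
      exacts [absurd h1 (by omega), ih h]

theorem del_left {n : ℕ} {S T : C} {σ : Chain C S T (n + 2)} {c : ℕ} (h : σ.IdAt c)
    (d : ℕ) (hd : d + c ≤ n) : (σ.del d).IdAt c := by
  induction n generalizing S d with
  | zero => have := h.one_le; omega
  | succ n ih =>
    match σ, h with
    | .cons u (.cons v (.cons w ρ)), h =>
      cases d with
      | zero =>
        rw [del_zero]
        rcases h with ⟨h1, _⟩ | ⟨h1, _⟩ | h
        exacts [absurd h1 (by omega), absurd h1 (by omega), Or.inr h]
      | succ d =>
        rcases h with ⟨h1, _⟩ | h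
        · omega
        · rw [del_cons_succ]
          exact Or.inr (ih h d (by omega))

theorem del_right {n : ℕ} {S T : C} {σ : Chain C S T (n + 2)} {c : ℕ}
    (h : σ.IdAt (c + 1)) (d : ℕ) (hd : d ≤ n) (hlt : n + 1 < d + c) : (σ.del d).IdAt c := by
  induction n generalizing S d with
  | zero => have := h.le_length; omega
  | succ n ih =>
    match σ, h with
    | .cons u (.cons v (.cons w ρ)), h =>
      cases d with
      | zero => have := h.le_length; omega
      | succ d =>
        rw [del_cons_succ]
        rcases h with ⟨h1, hu⟩ | h
        exacts [Or.inl ⟨by omega, hu⟩, Or.inr (ih h d (by omega) (by omega))]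

theorem mergesId_left {n : ℕ} {S T : C} {σ : Chain C S T (n + 2)} {c : ℕ} (h : σ.IdAt c)
    (d : ℕ) (hcd : c + d = n + 1) : σ.MergesId d := by
  induction n generalizing S d with
  | zero =>
    match σ, h with
    | .cons u (.cons v (.nil _)), h =>
      rcases h with ⟨h1, _⟩ | ⟨_, hv⟩ | h
      exacts [absurd h1 (by omega), Or.inr hv, h.elim]
  | succ n ih =>
    match σ, h, d with
    | .cons u (.cons v (.cons w ρ)), h, 0 =>
      rcases h with ⟨h1, _⟩ | ⟨_, hv⟩ | h
      exacts [absurd h1 (by omega), Or.inr hv, absurd h.le_length (by omega)]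
    | .cons u (.cons v (.cons w ρ)), h, d + 1 =>
      rcases h with ⟨h1, _⟩ | h
      exacts [absurd h1 (by omega), ih h d (by omega)]

theorem mergesId_right {n : ℕ} {S T : C} {σ : Chain C S T (n + 2)} {c : ℕ} (h : σ.IdAt c)
    (d : ℕ) (hcd : c + d = n + 2) (hc : 2 ≤ c) : σ.MergesId d := by
  induction n generalizing S d with
  | zero =>
    match σ, h with
    | .cons u (.cons v (.nil _)), h =>
      rcases h with ⟨_, hu⟩ | ⟨h1, _⟩ | h
      exacts [Or.inl hu, absurd h1 (by omega), h.elim]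
  | succ n ih =>
    match σ, h, d with
    | .cons u (.cons v (.cons w ρ)), h, 0 =>
      rcases h with ⟨_, hu⟩ | ⟨h1, _⟩ | h
      exacts [Or.inl hu, absurd h1 (by omega), absurd h.le_length (by omega)]
    | .cons u (.cons v (.cons w ρ)), h, d + 1 =>
      rcases h with ⟨h1, _⟩ | h
      exacts [absurd h1 (by omega), ih h d (by omega)]

theorem del_eq_del_succ {n : ℕ} {S T : C} {σ : Chain C S T (n + 2)} {c : ℕ}
    (h : σ.IdAt (c + 2)) (d : ℕ) (hcd : c + 2 + d = n + 1) : σ.del d = σ.del (d + 1) := by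
  induction n generalizing S d with
  | zero => omega
  | succ n ih =>
    match σ, h, d with
    | .cons u (.cons v (.cons w ρ)), h, 0 =>
      rcases h with ⟨h1, _⟩ | ⟨_, ⟨rfl, hv⟩⟩ | h
      · omega
      · obtain rfl := eq_of_heq hv
        change _ = cons u ((cons (𝟙 _) (cons w ρ)).del 0)
        rw [del_zero, del_zero, Category.comp_id, Category.id_comp]
      · have := h.le_length; omega
    | .cons u (.cons v (.cons w ρ)), h, d + 1 =>
      rcases h with ⟨h1, _⟩ | h
      · omega
      · rw [del_cons_succ, del_cons_succ, ih h d (by omega)]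

theorem insId_del {n : ℕ} {S T : C} {σ : Chain C S T (n + 2)} {c : ℕ} (h : σ.IdAt (c + 2))
    (d : ℕ) (hcd : c + 2 + d = n + 2) : (σ.del d).insId d = σ := by
  induction n generalizing S d with
  | zero =>
    obtain ⟨rfl, rfl⟩ : c = 0 ∧ d = 0 := by omega
    match σ, h with
    | .cons u (.cons v (.nil _)), h =>
      rcases h with ⟨_, ⟨rfl, hu⟩⟩ | ⟨h1, _⟩ | h
      · obtain rfl := eq_of_heq hu
        rw [del_zero, Category.id_comp]
        rfl
      · omega
      · exact h.elim
  | succ n ih =>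
    match σ, h, d with
    | .cons u (.cons v (.cons w ρ)), h, 0 =>
      rcases h with ⟨_, ⟨rfl, hu⟩⟩ | ⟨h1, _⟩ | h
      · obtain rfl := eq_of_heq hu
        rw [del_zero, Category.id_comp]
        rfl
      · omega
      · have := h.le_length; omega
    | .cons u (.cons v (.cons w ρ)), h, d + 1 =>
      rcases h with ⟨h1, _⟩ | h
      · omega
      · rw [del_cons_succ]
        change cons u (((cons v (cons w ρ)).del d).insId d) = _
        rw [ih h d (by omega)]

theorem insId_initLast_heq {n : ℕ} {S T : C} {σ : Chain C S T (n + 1)} (h : σ.IdAt 1) :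
    HEq (σ.initLast.2.1.insId n) σ := by
  induction n generalizing S with
  | zero =>
    match σ, h with
    | .cons u (.nil _), h =>
      rcases h with ⟨_, ⟨rfl, hu⟩⟩ | h
      · obtain rfl := eq_of_heq hu
        rfl
      · exact h.elim
  | succ n ih =>
    match σ, h with
    | .cons u ρ, h =>
      have hρ : ρ.IdAt 1 := h.of_cons (by omega)
      rw [initLast_cons]
      exact cons_hcongr hρ.isId_last.1 u (ih hρ)

theorem del_last_heq {n : ℕ} {S T : C} {σ : Chain C S T (n + 2)} (h : σ.IdAt 1) :
    HEq (σ.del n) σ.initLast.2.1 := by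
  induction n generalizing S with
  | zero =>
    match σ, h with
    | .cons u (.cons v (.nil _)), h =>
      rcases h with ⟨h1, _⟩ | ⟨_, ⟨rfl, hv⟩⟩ | h
      · omega
      · obtain rfl := eq_of_heq hv
        rw [del_zero, Category.comp_id]
        rfl
      · exact h.elim
  | succ n ih =>
    match σ, h with
    | .cons u ρ, h =>
      have hρ : ρ.IdAt 1 := h.of_cons (by omega)
      rw [del_cons_succ, initLast_cons]
      exact cons_hcongr hρ.isId_last.1.symm u (ih hρ)

end IdAt

theorem idAt_insId {S T : C} {n : ℕ} (σ : Chain C S T n) (m c : ℕ) (hc : 1 ≤ c)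
    (hm : m + c = n + 1) : (σ.insId m).IdAt c := by
  induction σ generalizing m with
  | nil =>
    obtain ⟨rfl, rfl⟩ : m = 0 ∧ c = 1 := by omega
    exact Or.inl ⟨rfl, isId_id _⟩
  | cons u ρ ih =>
    cases m with
    | zero => exact Or.inl ⟨by omega, isId_id _⟩
    | succ m => exact Or.inr (ih m (by omega))

theorem RightDeg.exists_idAt {S T : C} {n : ℕ} {σ : Chain C S T n} {K : ℕ}
    (h : σ.RightDeg K) : ∃ c ≤ K, σ.IdAt c := by
  induction σ with
  | nil => exact h.elim
  | cons u ρ ih =>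
    rcases h with ⟨h1, hu⟩ | h
    · exact ⟨_, h1, Or.inl ⟨rfl, hu⟩⟩
    · obtain ⟨c, hc, hid⟩ := ih h
      exact ⟨c, hc, Or.inr hid⟩

end Chain

section Prestack

variable {k : Type u₁} [CommRing k] {𝒰 : Type u₂} [Category.{v₁} 𝒰]
  {A : 𝒰 → Type w₁} [∀ U, Category.{w₂} (A U)] [∀ U, Preadditive (A U)]
  [∀ U, Linear k (A U)] (𝒜 : Prestack k 𝒰 A)

namespace Prestack

theorem twist_hom_eq_eqToHom {W V U : 𝒰} {v : W ⟶ V} {u : V ⟶ U}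
    (h : Chain.IsId v ∨ Chain.IsId u) :
    ∃ e : 𝒜.res u ⋙ 𝒜.res v = 𝒜.res (v ≫ u), (𝒜.twist v u).hom = eqToHom e := by
  rcases h with ⟨rfl, hv⟩ | ⟨rfl, hu⟩
  · obtain rfl := eq_of_heq hv
    refine ⟨by rw [Category.id_comp, 𝒜.res_id]; exact Functor.comp_id _, ?_⟩
    rw [𝒜.twist_id_left]
    simp
  · obtain rfl := eq_of_heq hu
    refine ⟨by rw [Category.comp_id, 𝒜.res_id]; exact Functor.id_comp _, ?_⟩
    rw [𝒜.twist_id_right]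
    simp

theorem twist_hom_app_of_isId {V W T : 𝒰} (f : V ⟶ W) {g : W ⟶ T} (hg : Chain.IsId g)
    (Y : A T) : ∃ h : (𝒜.res g ⋙ 𝒜.res f).obj Y = (𝒜.res (f ≫ g)).obj Y,
      (𝒜.twist f g).hom.app Y = eqToHom h :=
  let ⟨e, he⟩ := 𝒜.twist_hom_eq_eqToHom (Or.inr hg)
  ⟨Functor.congr_obj e Y, by rw [he, eqToHom_app]⟩

end Prestack

namespace Chain

theorem star_insId : ∀ {S T : 𝒰} {n : ℕ} (σ : Chain 𝒰 S T n) (m : ℕ),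
    (σ.insId m).star 𝒜 = σ.star 𝒜
  | _, _, _, .nil _, 0 | _, _, _, .nil _, _ + 1 | _, _, _, .cons _ _, 0 => by
      change _ ⋙ 𝒜.res (𝟙 _) = _
      rw [𝒜.res_id]
      exact Functor.comp_id _
  | _, _, _, .cons u ρ, m + 1 => by
      change (ρ.insId m).star 𝒜 ⋙ 𝒜.res u = _
      rw [star_insId ρ m]
      rfl

theorem ast_insId {S T : 𝒰} {n : ℕ} (σ : Chain 𝒰 S T n) (m : ℕ) :
    (σ.insId m).ast 𝒜 = σ.ast 𝒜 := by
  rw [← res_comp_eq_ast, ← res_comp_eq_ast, comp_insId]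

theorem eps_zero_app_heq {S M₁ M₂ T : 𝒰} {n : ℕ} (u : S ⟶ M₁) (v : M₁ ⟶ M₂)
    (ρ : Chain 𝒰 M₂ T n) (X : A T) :
    HEq (((cons u (cons v ρ)).eps 𝒜 0).app X) ((𝒜.twist u v).hom.app ((ρ.star 𝒜).obj X)) := by
  cases ρ <;> rfl

theorem eps_succ_app_heq {S M T : 𝒰} {n : ℕ} (u : S ⟶ M) (τ : Chain 𝒰 M T (n + 2)) (d : ℕ)
    (X : A T) : HEq (((cons u τ).eps 𝒜 (d + 1)).app X) ((𝒜.res u).map ((τ.eps 𝒜 d).app X)) := by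
  match τ with
  | .cons _ (.cons _ _) => rfl

theorem eps_app_insId_heq : ∀ {d n : ℕ} {S T : 𝒰} (σ : Chain 𝒰 S T (n + 2)) (m : ℕ),
    d < m → m ≤ n + 1 → ∀ X : A T,
      HEq (((σ.insId (m + 1)).eps 𝒜 d).app X) ((σ.eps 𝒜 d).app X)
  | 0, _, _, _, .cons u (.cons v ρ), m + 1, _, _, X => by
      refine (eps_zero_app_heq 𝒜 u v (ρ.insId m) X).trans
        (HEq.trans ?_ (eps_zero_app_heq 𝒜 u v ρ X).symm)
      rw [star_insId]
  | d + 1, n + 1, _, _, .cons u τ, m + 1, hd, hm, X => by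
      refine (eps_succ_app_heq 𝒜 u (τ.insId (m + 1)) d X).trans
        (HEq.trans ?_ (eps_succ_app_heq 𝒜 u τ d X).symm)
      have hτ := eps_app_insId_heq (d := d) τ m (by omega) (by omega) X
      congr 1
      · rw [star_insId]
      · rw [del_insId_of_lt τ m (by omega) (by omega), star_insId]
  | _, _, _, _, _, 0, hd, _, _ | _ + 1, 0, _, _, _, _ + 1, hd, _, _ => by omega

theorem MergesId.eps_app_eq_eqToHom : ∀ {n : ℕ} {S T : 𝒰} {σ : Chain 𝒰 S T (n + 2)} {d : ℕ},
    σ.MergesId d → ∃ h : (σ.del d).star 𝒜 = σ.star 𝒜, ∀ X : A T,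
      (σ.eps 𝒜 d).app X = eqToHom (congrArg (fun F => F.obj X) h.symm)
  | 0, _, _, .cons u (.cons v (.nil _)), _, hp => by
      obtain ⟨e, he⟩ := 𝒜.twist_hom_eq_eqToHom hp
      refine ⟨?_, fun X => ?_⟩
      · change star 𝒜 (nil _) ⋙ 𝒜.res (u ≫ v) = (star 𝒜 (nil _) ⋙ 𝒜.res v) ⋙ 𝒜.res u
        rw [← e]
        rfl
      · change (𝒜.twist u v).hom.app X = _
        rw [he, eqToHom_app]
        rfl
  | _ + 1, _, _, .cons u (.cons v (.cons w ρ)), 0, hp => by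
      obtain ⟨e, he⟩ := 𝒜.twist_hom_eq_eqToHom hp
      refine ⟨?_, fun X => ?_⟩
      · change (cons w ρ).star 𝒜 ⋙ 𝒜.res (u ≫ v) = ((cons w ρ).star 𝒜 ⋙ 𝒜.res v) ⋙ 𝒜.res u
        rw [Functor.assoc, e]
      · change (Functor.whiskerLeft ((cons w ρ).star 𝒜) (𝒜.twist u v).hom).app X = _
        rw [Functor.whiskerLeft_app, he, eqToHom_app]
        rfl
  | _ + 1, _, _, .cons u (.cons v (.cons w ρ)), d + 1, hp => by
      obtain ⟨h, happ⟩ := MergesId.eps_app_eq_eqToHom (σ := cons v (cons w ρ)) hp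
      refine ⟨?_, fun X => ?_⟩
      · rw [del_cons_succ]
        change ((cons v (cons w ρ)).del d).star 𝒜 ⋙ 𝒜.res u = _
        rw [h]
        rfl
      · change (𝒜.res u).map (((cons v (cons w ρ)).eps 𝒜 d).app X) = _
        rw [happ X, eqToHom_map]
        rfl

end Chain

end Prestack

section Bimodule

variable {k : Type u₁} [CommRing k] {𝒰 : Type u₂} [Category.{v₁} 𝒰]
  {A : 𝒰 → Type w₁} [∀ U, Category.{w₂} (A U)] [∀ U, Preadditive (A U)]
  [∀ U, Linear k (A U)] {𝒜 : Prestack k 𝒰 A}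

namespace Bimodule

variable (M : Bimodule 𝒜) {U : 𝒰}

theorem castV_castV {X X' X'' Y Y' Y'' : A U} (h₁ : X = X') (h₂ : Y = Y') (g₁ : X' = X'')
    (g₂ : Y' = Y'') (x : M.val U X Y) :
    M.castV g₁ g₂ (M.castV h₁ h₂ x) = M.castV (h₁.trans g₁) (h₂.trans g₂) x := by
  subst h₁ h₂ g₁ g₂
  rfl

theorem castV_heq {X X' Y Y' : A U} (h₁ : X = X') (h₂ : Y = Y') (x : M.val U X Y) :
    HEq (M.castV h₁ h₂ x) x := by
  subst h₁ h₂
  rfl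

def castVHom {X X' Y Y' : A U} (h₁ : X = X') (h₂ : Y = Y') : M.val U X Y →+ M.val U X' Y' :=
  AddMonoidHom.mk' (M.castV h₁ h₂) fun x y => by subst h₁ h₂; rfl

theorem castV_zero {X X' Y Y' : A U} (h₁ : X = X') (h₂ : Y = Y') :
    M.castV h₁ h₂ (0 : M.val U X Y) = 0 :=
  (M.castVHom h₁ h₂).map_zero

theorem castV_add {X X' Y Y' : A U} (h₁ : X = X') (h₂ : Y = Y') (x y : M.val U X Y) :
    M.castV h₁ h₂ (x + y) = M.castV h₁ h₂ x + M.castV h₁ h₂ y :=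
  (M.castVHom h₁ h₂).map_add x y

theorem castV_zsmul {X X' Y Y' : A U} (h₁ : X = X') (h₂ : Y = Y') (n : ℤ) (x : M.val U X Y) :
    M.castV h₁ h₂ (n • x) = n • M.castV h₁ h₂ x :=
  (M.castVHom h₁ h₂).map_zsmul n x

theorem castV_sum {X X' Y Y' : A U} (h₁ : X = X') (h₂ : Y = Y') {n : ℕ}
    (f : Fin n → M.val U X Y) : M.castV h₁ h₂ (∑ e, f e) = ∑ e, M.castV h₁ h₂ (f e) :=
  map_sum (M.castVHom h₁ h₂) f Finset.univ

theorem actL_zero {X Y Y' : A U} (g : Y ⟶ Y') : M.actL g (0 : M.val U X Y) = 0 :=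
  (AddMonoidHom.mk' (M.actL g) (M.actL_add g)).map_zero

theorem actL_zsmul {X Y Y' : A U} (g : Y ⟶ Y') (n : ℤ) (x : M.val U X Y) :
    M.actL g (n • x) = n • M.actL g x :=
  (AddMonoidHom.mk' (M.actL g) (M.actL_add g)).map_zsmul n x

theorem actR_zero {X X' Y : A U} (f : X' ⟶ X) : M.actR (0 : M.val U X Y) f = 0 :=
  (AddMonoidHom.mk' (M.actR · f) (M.actR_add f)).map_zero

theorem actR_zsmul {X X' Y : A U} (f : X' ⟶ X) (n : ℤ) (x : M.val U X Y) :
    M.actR (n • x) f = n • M.actR x f :=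
  (AddMonoidHom.mk' (M.actR · f) (M.actR_add f)).map_zsmul n x

theorem rst_zero {V : 𝒰} (u : V ⟶ U) {X Y : A U} : M.rst u (0 : M.val U X Y) = 0 :=
  (AddMonoidHom.mk' (M.rst u) (M.rst_add u)).map_zero

theorem rst_zsmul {V : 𝒰} (u : V ⟶ U) {X Y : A U} (n : ℤ) (x : M.val U X Y) :
    M.rst u (n • x) = n • M.rst u x :=
  (AddMonoidHom.mk' (M.rst u) (M.rst_add u)).map_zsmul n x

theorem actL_eqToHom {X Y Y' : A U} (h : Y = Y') (x : M.val U X Y) :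
    M.actL (eqToHom h) x = M.castV rfl h x := by
  subst h
  rw [eqToHom_refl, M.actL_id]
  rfl

theorem actR_eqToHom {X X' Y : A U} (h : X' = X) (x : M.val U X Y) :
    M.actR x (eqToHom h) = M.castV h.symm rfl x := by
  subst h
  rw [eqToHom_refl, M.actR_id]
  rfl

theorem actL_hcongr {X₁ Y₁ Z₁ X₂ Y₂ Z₂ : A U} (hX : X₁ = X₂) (hY : Y₁ = Y₂) (hZ : Z₁ = Z₂)
    {g₁ : Y₁ ⟶ Z₁} {g₂ : Y₂ ⟶ Z₂} (hg : HEq g₁ g₂) {x₁ : M.val U X₁ Y₁} {x₂ : M.val U X₂ Y₂}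
    (hx : HEq x₁ x₂) : HEq (M.actL g₁ x₁) (M.actL g₂ x₂) := by
  subst hX hY hZ
  rw [eq_of_heq hg, eq_of_heq hx]

theorem actR_hcongr {X₁ X₁' Y₁ X₂ X₂' Y₂ : A U} (hX : X₁ = X₂) (hX' : X₁' = X₂') (hY : Y₁ = Y₂)
    {f₁ : X₁' ⟶ X₁} {f₂ : X₂' ⟶ X₂} (hf : HEq f₁ f₂) {x₁ : M.val U X₁ Y₁} {x₂ : M.val U X₂ Y₂}
    (hx : HEq x₁ x₂) : HEq (M.actR x₁ f₁) (M.actR x₂ f₂) := by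
  subst hX hX' hY
  rw [eq_of_heq hf, eq_of_heq hx]

theorem rst_hcongr {V : 𝒰} (u : V ⟶ U) {X₁ Y₁ X₂ Y₂ : A U} (hX : X₁ = X₂) (hY : Y₁ = Y₂)
    {x₁ : M.val U X₁ Y₁} {x₂ : M.val U X₂ Y₂} (hx : HEq x₁ x₂) :
    HEq (M.rst u x₁) (M.rst u x₂) := by
  subst hX hY
  rw [eq_of_heq hx]

theorem zsmul_hcongr {X₁ Y₁ X₂ Y₂ : A U} (hX : X₁ = X₂) (hY : Y₁ = Y₂) (n : ℤ)
    {x₁ : M.val U X₁ Y₁} {x₂ : M.val U X₂ Y₂} (hx : HEq x₁ x₂) : HEq (n • x₁) (n • x₂) := by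
  subst hX hY
  rw [eq_of_heq hx]

end Bimodule

variable {M : Bimodule 𝒜}

theorem Cpq.apply_hcongr {p q : ℕ} (ξ : Cpq 𝒜 M p q) {S T T' : 𝒰} (hT : T = T')
    {σ : Chain 𝒰 S T p} {σ' : Chain 𝒰 S T' p} (hσ : HEq σ σ') {X Y : A T} {X' Y' : A T'}
    (hX : HEq X X') (hY : HEq Y Y') {a : Chain (A T) X Y q} {a' : Chain (A T') X' Y' q}
    (ha : HEq a a') : HEq (ξ S T σ X Y a) (ξ S T' σ' X' Y' a') := by
  subst hT
  obtain rfl := eq_of_heq hσ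
  obtain rfl := eq_of_heq hX
  obtain rfl := eq_of_heq hY
  rw [eq_of_heq ha]

theorem Cpq.apply_res_heq_of_isId {p q : ℕ} (ξ : Cpq 𝒜 M p q) {S W T : 𝒰}
    (σ : Chain 𝒰 S W p) {g : W ⟶ T} (hg : Chain.IsId g) (σ' : Chain 𝒰 S T p) (hσ : HEq σ' σ)
    {X Y : A T} (a : Chain (A T) X Y q) :
    HEq (ξ S W σ ((𝒜.res g).obj X) ((𝒜.res g).obj Y) (a.mapC (𝒜.res g))) (ξ S T σ' X Y a) := by
  obtain ⟨rfl, hg⟩ := hg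
  obtain rfl := eq_of_heq hg
  obtain rfl := eq_of_heq hσ
  have hres := 𝒜.res_id W
  exact ξ.apply_hcongr rfl HEq.rfl (by rw [hres]; rfl) (by rw [hres]; rfl)
    ((hres ▸ HEq.rfl : HEq (a.mapC (𝒜.res (𝟙 W))) (a.mapC (𝟭 _))).trans (heq_of_eq a.mapC_id))

end Bimodule

section Faces

variable {k : Type u₁} [CommRing k] {𝒰 : Type u₂} [Category.{v₁} 𝒰]
  {A : 𝒰 → Type w₁} [∀ U, Category.{w₂} (A U)] [∀ U, Preadditive (A U)]
  [∀ U, Linear k (A U)] {𝒜 : Prestack k 𝒰 A} {M : Bimodule 𝒜}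

open Chain

def dSimpFirst {p q : ℕ} (ξ : Cpq 𝒜 M p q) {S V T : 𝒰} (u : S ⟶ V) (σ' : Chain 𝒰 V T p)
    (X Y : A T) (a : Chain (A T) X Y q) :
    M.val S (((cons u σ').star 𝒜).obj X) (((cons u σ').ast 𝒜).obj Y) :=
  M.castV
    (rfl : (𝒜.res u).obj ((σ'.star 𝒜).obj X) = ((cons u σ').star 𝒜).obj X)
    ((congrArg (fun f => (𝒜.res f).obj Y) (comp_cons' u σ').symm :
      (𝒜.res (u ≫ σ'.comp)).obj Y = ((cons u σ').ast 𝒜).obj Y))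
    (M.actL ((𝒜.twist u σ'.comp).hom.app Y)
      (M.castV rfl
        ((congrArg (fun F => (𝒜.res u).obj (F.obj Y)) (res_comp_eq_ast 𝒜 σ').symm :
          (𝒜.res u).obj ((σ'.ast 𝒜).obj Y) = (𝒜.res σ'.comp ⋙ 𝒜.res u).obj Y))
        (M.rst u (ξ _ T σ' X Y a))))

/-- The face `i = j + 1` of `dSimp ξ` at `cons u σ'`, composing the entries `j` and `j + 1`. -/
def dSimpMid {p q : ℕ} (ξ : Cpq 𝒜 M p q) {S V T : 𝒰} (u : S ⟶ V) (σ' : Chain 𝒰 V T p)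
    (X Y : A T) (a : Chain (A T) X Y q) (j : Fin p) :
    M.val S (((cons u σ').star 𝒜).obj X) (((cons u σ').ast 𝒜).obj Y) :=
  let h1 : p + 1 = p - 1 + 2 := by have := j.isLt; omega
  let h2 : p - 1 + 1 = p := by have := j.isLt; omega
  let σc := cast' h1 (cons u σ')
  let σd := cast' h2 (σc.del j.val)
  ((-1 : ℤ) ^ (j.val + 1)) •
    (M.castV
      ((congrArg (fun F => F.obj X) (star_cast' 𝒜 h1 (cons u σ')) :
        (σc.star 𝒜).obj X = ((cons u σ').star 𝒜).obj X))
      ((congrArg (fun F => F.obj Y)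
          (show σd.ast 𝒜 = (cons u σ').ast 𝒜 by rw [ast_cast', ast_del, ast_cast']) :
        (σd.ast 𝒜).obj Y = ((cons u σ').ast 𝒜).obj Y))
      (M.actR (ξ S T σd X Y a)
        ((σc.eps 𝒜 j.val).app X ≫
          eqToHom ((congrArg (fun F => F.obj X) (star_cast' 𝒜 h2 (σc.del j.val))).symm))))

def dSimpLast {p q : ℕ} (ξ : Cpq 𝒜 M p q) {S V T : 𝒰} (u : S ⟶ V) (σ' : Chain 𝒰 V T p)
    (X Y : A T) (a : Chain (A T) X Y q) :
    M.val S (((cons u σ').star 𝒜).obj X) (((cons u σ').ast 𝒜).obj Y) :=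
  ((-1 : ℤ) ^ (p + 1)) •
    (M.castV
      ((Functor.congr_obj (star_init 𝒜 (cons u σ')) X).symm :
        ((𝒜.res (cons u σ').initLast.2.2 ⋙ (cons u σ').initLast.2.1.star 𝒜).obj X) =
          ((cons u σ').star 𝒜).obj X)
      ((congrArg (fun f => (𝒜.res f).obj Y) (comp_init (cons u σ')) :
        (𝒜.res ((cons u σ').initLast.2.1.comp ≫ (cons u σ').initLast.2.2)).obj Y =
          ((cons u σ').ast 𝒜).obj Y))
      (M.actL ((𝒜.twist (cons u σ').initLast.2.1.comp (cons u σ').initLast.2.2).hom.app Y)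
        (M.castV rfl
          ((congrArg (fun F => F.obj ((𝒜.res (cons u σ').initLast.2.2).obj Y))
              (res_comp_eq_ast 𝒜 (cons u σ').initLast.2.1).symm :
            ((cons u σ').initLast.2.1.ast 𝒜).obj ((𝒜.res (cons u σ').initLast.2.2).obj Y) =
              (𝒜.res (cons u σ').initLast.2.2 ⋙ 𝒜.res (cons u σ').initLast.2.1.comp).obj Y))
          (ξ S _ (cons u σ').initLast.2.1 _ _ (a.mapC (𝒜.res (cons u σ').initLast.2.2))))))

variable {q : ℕ} {S V T : 𝒰} (u : S ⟶ V) (X Y : A T) (a : Chain (A T) X Y q)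

theorem dSimp_cons {p : ℕ} (ξ : Cpq 𝒜 M p q) (σ' : Chain 𝒰 V T p) :
    dSimp 𝒜 M ξ S T (cons u σ') X Y a =
      dSimpFirst ξ u σ' X Y a + ∑ j, dSimpMid ξ u σ' X Y a j + dSimpLast ξ u σ' X Y a :=
  rfl

theorem dSimpMid_eq {p : ℕ} (ξ : Cpq 𝒜 M (p + 1) q) (σ' : Chain 𝒰 V T (p + 1))
    (j : Fin (p + 1)) :
    dSimpMid ξ u σ' X Y a j = ((-1 : ℤ) ^ (j.val + 1)) •
      M.castV rfl (congrArg (fun F => F.obj Y) (ast_del 𝒜 (cons u σ') j.val))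
        (M.actR (ξ S T ((cons u σ').del j.val) X Y a) (((cons u σ').eps 𝒜 j.val).app X)) := by
  rw [← Category.comp_id (((cons u σ').eps 𝒜 j.val).app X), ← eqToHom_refl _ rfl]
  rfl

theorem dSimpFirst_eq_zero {p : ℕ} (ξ : Cpq 𝒜 M p q) (σ' : Chain 𝒰 V T p)
    (h : ξ V T σ' X Y a = 0) : dSimpFirst ξ u σ' X Y a = 0 := by
  unfold dSimpFirst
  rw [h, M.rst_zero, M.castV_zero, M.actL_zero]
  exact M.castV_zero _ _

theorem dSimpMid_eq_zero {p : ℕ} (ξ : Cpq 𝒜 M (p + 1) q) (σ' : Chain 𝒰 V T (p + 1))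
    (j : Fin (p + 1)) (h : ξ S T ((cons u σ').del j.val) X Y a = 0) :
    dSimpMid ξ u σ' X Y a j = 0 := by
  rw [dSimpMid_eq, h, M.actR_zero, M.castV_zero, smul_zero]

theorem dSimpLast_eq_zero {p : ℕ} (ξ : Cpq 𝒜 M p q) (σ' : Chain 𝒰 V T p)
    (h : ξ S _ (cons u σ').initLast.2.1 _ _ (a.mapC (𝒜.res (cons u σ').initLast.2.2)) = 0) :
    dSimpLast ξ u σ' X Y a = 0 := by
  rw [dSimpLast, h, M.castV_zero, M.actL_zero, M.castV_zero, smul_zero]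
  rfl

theorem dSimp_zero {p : ℕ} : dSimp 𝒜 M (0 : Cpq 𝒜 M p q) = 0 := by
  funext S T σ X Y a
  match σ with
  | .cons u σ' =>
    have h0 : ∀ τ : Chain 𝒰 S T p, (0 : Cpq 𝒜 M p q) S T τ X Y a = 0 := fun _ => rfl
    rw [dSimp_cons, dSimpFirst_eq_zero _ _ _ _ _ _ rfl, dSimpLast_eq_zero _ _ _ _ _ _ rfl,
      Finset.sum_eq_zero fun j _ => ?_, zero_add, add_zero]
    · rfl
    unfold dSimpMid
    dsimp only
    rw [h0, M.actR_zero, M.castV_zero, smul_zero]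

/-- `e₁`, `e₂` are arbitrary proofs of the object equalities, so that callers can supply
whichever form they have at hand. -/
theorem dSimpMid_of_mergesId {p : ℕ} (ξ : Cpq 𝒜 M (p + 1) q) (σ' : Chain 𝒰 V T (p + 1))
    (j : Fin (p + 1)) {d : ℕ} (hj : j.val = d) (hd : (cons u σ').MergesId d)
    (e₁ : (((cons u σ').del d).star 𝒜).obj X = ((cons u σ').star 𝒜).obj X)
    (e₂ : (((cons u σ').del d).ast 𝒜).obj Y = ((cons u σ').ast 𝒜).obj Y) :
    dSimpMid ξ u σ' X Y a j =
      ((-1 : ℤ) ^ (d + 1)) • M.castV e₁ e₂ (ξ S T ((cons u σ').del d) X Y a) := by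
  subst hj
  obtain ⟨h, happ⟩ := hd.eps_app_eq_eqToHom 𝒜
  rw [dSimpMid_eq, happ X, M.actR_eqToHom, M.castV_castV]

theorem dSimpLast_of_idAt_one {p : ℕ} (ξ : Cpq 𝒜 M (p + 1) q) (σ' : Chain 𝒰 V T (p + 1))
    (hid : (cons u σ').IdAt 1)
    (e₁ : (((cons u σ').del p).star 𝒜).obj X = ((cons u σ').star 𝒜).obj X)
    (e₂ : (((cons u σ').del p).ast 𝒜).obj Y = ((cons u σ').ast 𝒜).obj Y) :
    dSimpLast ξ u σ' X Y a =
      ((-1 : ℤ) ^ (p + 1 + 1)) • M.castV e₁ e₂ (ξ S T ((cons u σ').del p) X Y a) := by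
  obtain ⟨hobj, htw⟩ := 𝒜.twist_hom_app_of_isId (cons u σ').initLast.2.1.comp hid.isId_last Y
  rw [dSimpLast, htw, M.actL_eqToHom, M.castV_castV, M.castV_castV]
  congr 1
  exact eq_of_heq ((M.castV_heq _ _ _).trans
    ((ξ.apply_res_heq_of_isId _ hid.isId_last _ hid.del_last_heq a).trans
      (M.castV_heq e₁ e₂ _).symm))

theorem dSimpMid_add_dSimpMid_eq_zero {p : ℕ} (ξ : Cpq 𝒜 M (p + 1) q)
    (σ' : Chain 𝒰 V T (p + 1)) {c : ℕ} (hid : (cons u σ').IdAt (c + 2)) (j j' : Fin (p + 1))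
    (hj : c + 2 + j.val = p + 1) (hj' : j'.val = j.val + 1) :
    dSimpMid ξ u σ' X Y a j + dSimpMid ξ u σ' X Y a j' = 0 := by
  have hdel := hid.del_eq_del_succ j.val hj
  obtain ⟨hst, _⟩ := (hid.mergesId_left j.val (by omega)).eps_app_eq_eqToHom 𝒜
  have e₁ := congrArg (fun F => F.obj X) hst
  have e₂ := congrArg (fun F => F.obj Y) (ast_del 𝒜 (cons u σ') j.val)
  rw [dSimpMid_of_mergesId u X Y a ξ σ' j rfl (hid.mergesId_left j.val (by omega)) e₁ e₂,
    dSimpMid_of_mergesId u X Y a ξ σ' j' hj' (hid.mergesId_right _ (by omega) (by omega))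
      (hdel ▸ e₁) (hdel ▸ e₂), pow_succ _ (j.val + 1), mul_neg_one, neg_smul]
  refine add_neg_eq_zero.mpr (congrArg _ (eq_of_heq ?_))
  exact (M.castV_heq _ _ _).trans ((ξ.apply_hcongr rfl (heq_of_eq hdel) HEq.rfl HEq.rfl
    HEq.rfl).trans (M.castV_heq _ _ _).symm)

theorem dSimpMid_add_dSimpLast_eq_zero {p : ℕ} (ξ : Cpq 𝒜 M (p + 1) q)
    (σ' : Chain 𝒰 V T (p + 1)) (hid : (cons u σ').IdAt 1) (j : Fin (p + 1)) (hj : j.val = p) :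
    dSimpMid ξ u σ' X Y a j + dSimpLast ξ u σ' X Y a = 0 := by
  have hm := hid.mergesId_left p (by omega)
  obtain ⟨hst, _⟩ := hm.eps_app_eq_eqToHom 𝒜
  have e₁ := congrArg (fun F => F.obj X) hst
  have e₂ := congrArg (fun F => F.obj Y) (ast_del 𝒜 (cons u σ') p)
  rw [dSimpMid_of_mergesId u X Y a ξ σ' j hj hm e₁ e₂, dSimpLast_of_idAt_one u X Y a ξ σ' hid e₁ e₂,
    pow_succ _ (p + 1), mul_neg_one, neg_smul, add_neg_cancel]

end Faces

theorem Chain.RightDeg.mono {C : Type u₂} [Category.{v₁} C] {S T : C} {n : ℕ}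
    {σ : Chain C S T n} {K K' : ℕ} (h : σ.RightDeg K) (hK : K ≤ K') : σ.RightDeg K' :=
  let ⟨_, hc, hid⟩ := h.exists_idAt
  hid.rightDeg (hc.trans hK)

section Reduced

variable {k : Type u₁} [CommRing k] {𝒰 : Type u₂} [Category.{v₁} 𝒰]
  {A : 𝒰 → Type w₁} [∀ U, Category.{w₂} (A U)] [∀ U, Preadditive (A U)]
  [∀ U, Linear k (A U)] {𝒜 : Prestack k 𝒰 A} {M : Bimodule 𝒜}

open Chain

theorem RightReduced.mono {p q : ℕ} {ξ : Cpq 𝒜 M p q} {K K' : ℕ}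
    (h : RightReduced 𝒜 M K' ξ) (hK : K ≤ K') : RightReduced 𝒜 M K ξ :=
  fun S T σ hσ => h S T σ (hσ.mono hK)

variable {q : ℕ} {S V T : 𝒰} (u : S ⟶ V) (X Y : A T) (a : Chain (A T) X Y q)

/-- The two faces through the identity cancel; every other face keeps an identity within the
last `c + 2` entries. -/
theorem sum_dSimpMid_add_dSimpLast_of_idAt_add_two {p : ℕ} {ξ : Cpq 𝒜 M (p + 1) q}
    {σ' : Chain 𝒰 V T (p + 1)} {c : ℕ} (hξ : RightReduced 𝒜 M (c + 2) ξ)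
    (hid : (cons u σ').IdAt (c + 2)) (hc : c + 2 ≤ p + 1) :
    ∑ j, dSimpMid ξ u σ' X Y a j + dSimpLast ξ u σ' X Y a = 0 := by
  have hlast : dSimpLast ξ u σ' X Y a = 0 :=
    dSimpLast_eq_zero u X Y a ξ σ' (hξ _ _ _ (hid.initLast.rightDeg (by omega)) _ _ _)
  have hsum : ∑ j, dSimpMid ξ u σ' X Y a j =
      dSimpMid ξ u σ' X Y a ⟨p - 1 - c, by omega⟩ + dSimpMid ξ u σ' X Y a ⟨p - c, by omega⟩ := by
    refine Finset.sum_eq_add_of_mem _ _ (Finset.mem_univ _) (Finset.mem_univ _)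
      (fun h => by simp only [Fin.mk.injEq] at h; omega) fun d _ ⟨hd₁, hd₂⟩ => ?_
    have hd₁ : d.val ≠ p - 1 - c := fun h => hd₁ (Fin.ext h)
    have hd₂ : d.val ≠ p - c := fun h => hd₂ (Fin.ext h)
    refine dSimpMid_eq_zero u X Y a ξ σ' d (hξ _ _ _ ?_ _ _ _)
    rcases Nat.lt_or_gt_of_ne hd₁ with hlt | hgt
    · exact (hid.del_left d.val (by omega)).rightDeg le_rfl
    · exact (hid.del_right d.val (by omega) (by omega)).rightDeg (by omega)
  rw [hsum, dSimpMid_add_dSimpMid_eq_zero u X Y a ξ σ' hid _ _ (by simp only; omega)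
    (by simp only; omega), hlast,
    add_zero]

/-- The face through a last identity cancels the last face; the other faces keep it. -/
theorem sum_dSimpMid_add_dSimpLast_of_idAt_one {p : ℕ} {ξ : Cpq 𝒜 M (p + 1) q}
    {σ' : Chain 𝒰 V T (p + 1)} (hξ : RightReduced 𝒜 M 1 ξ) (hid : (cons u σ').IdAt 1) :
    ∑ j, dSimpMid ξ u σ' X Y a j + dSimpLast ξ u σ' X Y a = 0 := by
  have hmid : ∀ d ≠ Fin.last p, dSimpMid ξ u σ' X Y a d = 0 := fun d hd =>
    dSimpMid_eq_zero u X Y a ξ σ' d (hξ _ _ _ ((hid.del_left d.val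
      (by have := Fin.val_lt_last hd; omega)).rightDeg le_rfl) _ _ _)
  rw [Fintype.sum_eq_single _ hmid, dSimpMid_add_dSimpLast_eq_zero u X Y a ξ σ' hid _ rfl]

theorem RightReduced.dSimp {p : ℕ} {ξ : Cpq 𝒜 M p q} {kk : ℕ} (hξ : RightReduced 𝒜 M kk ξ)
    (hkk : kk ≤ p) : RightReduced 𝒜 M kk (dSimp 𝒜 M ξ) := by
  intro S T σ hσ X Y a
  obtain ⟨c, hc, hid⟩ := hσ.exists_idAt
  obtain ⟨p, rfl⟩ : ∃ p', p = p' + 1 := ⟨p - 1, by have := hid.one_le; omega⟩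
  match σ, hid with
  | .cons u σ', hid =>
    rw [dSimp_cons, dSimpFirst_eq_zero u X Y a ξ σ'
      (hξ _ _ _ ((hid.of_cons (by omega)).rightDeg hc) _ _ _), zero_add]
    obtain ⟨c, rfl⟩ | rfl : (∃ c', c = c' + 2) ∨ c = 1 := by
      have := hid.one_le
      exact (Nat.lt_or_ge c 2).elim (fun _ => Or.inr (by omega)) fun _ => Or.inl ⟨c - 2, by omega⟩
    · exact sum_dSimpMid_add_dSimpLast_of_idAt_add_two u X Y a (hξ.mono hc) hid (by omega)
    · exact sum_dSimpMid_add_dSimpLast_of_idAt_one u X Y a (hξ.mono hc) hid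

end Reduced

theorem sum_eq_sum_castSucc_sub {G : Type*} [AddCommGroup G] {p : ℕ} (f : Fin p → G)
    (g : Fin (p + 1) → G) (i : Fin (p + 1)) (h₁ : ∀ d, d.castSucc ≠ i → f d = g d.castSucc)
    (h₂ : ∀ d, d.castSucc = i → f d = 0) (h₃ : ∀ e, i < e → g e = 0) :
    ∑ d, f d = ∑ e, g e - g i := by
  rw [Fin.sum_univ_castSucc]
  by_cases hi : i = Fin.last p
  · subst hi
    rw [add_sub_cancel_right]
    exact Finset.sum_congr rfl fun d _ => h₁ d (Fin.castSucc_ne_last d)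
  · obtain ⟨i, rfl⟩ := Fin.exists_castSucc_eq.mpr hi
    have hg : ∀ d, g d.castSucc = f d + if d = i then g i.castSucc else 0 := fun d => by
      split_ifs with hd
      · rw [hd, h₂ i rfl, zero_add]
      · rw [h₁ d (Fin.castSucc_injective _ |>.ne hd), add_zero]
    rw [Finset.sum_congr rfl fun d _ => hg d, Finset.sum_add_distrib, Finset.sum_ite_eq',
      if_pos (Finset.mem_univ _), h₃ _ (Fin.castSucc_lt_last i), add_zero, add_sub_cancel_right]

theorem neg_one_pow_smul_neg_one_pow_smul {G : Type*} [AddCommGroup G] (n : ℕ) (x : G) :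
    ((-1 : ℤ) ^ n) • ((-1 : ℤ) ^ n) • x = x := by
  rw [smul_smul, ← mul_pow, neg_one_mul, neg_neg, one_pow, one_smul]

section Homotopy

variable {k : Type u₁} [CommRing k] {𝒰 : Type u₂} [Category.{v₁} 𝒰]
  {A : 𝒰 → Type w₁} [∀ U, Category.{w₂} (A U)] [∀ U, Preadditive (A U)]
  [∀ U, Linear k (A U)] {𝒜 : Prestack k 𝒰 A} {M : Bimodule 𝒜}

open Chain

/-- The identity inserted into `τ` is followed by exactly `kk` entries; the sign makes the face
through it contribute `+ φ` to `dSimp`. -/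
def simpHomotopy (kk : ℕ) {p q : ℕ} (φ : Cpq 𝒜 M (p + 1) q) : Cpq 𝒜 M p q :=
  fun S T τ X Y a => ((-1 : ℤ) ^ (p - kk + 1)) •
    M.castV (congrArg (fun F => F.obj X) (star_insId 𝒜 τ (p - kk)))
      (congrArg (fun F => F.obj Y) (ast_insId 𝒜 τ (p - kk))) (φ S T (τ.insId (p - kk)) X Y a)

theorem simpHomotopy_normalized {kk p q : ℕ} {φ : Cpq 𝒜 M (p + 1) q}
    (hφ : Normalized 𝒜 M φ) : Normalized 𝒜 M (simpHomotopy kk φ) := by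
  intro S T σ X Y a ha
  rw [simpHomotopy, hφ S T _ X Y a ha, M.castV_zero, smul_zero]

theorem simpHomotopy_rightReduced {kk p q : ℕ} {φ : Cpq 𝒜 M (p + 1) q}
    (hφ : RightReduced 𝒜 M kk φ) (hkk : kk ≤ p) : RightReduced 𝒜 M kk (simpHomotopy kk φ) := by
  intro S T σ hσ X Y a
  obtain ⟨c, hc, hid⟩ := hσ.exists_idAt
  rw [simpHomotopy, hφ S T _ ((hid.insId (p - kk) (by omega)).rightDeg hc) X Y a, M.castV_zero,
    smul_zero]

variable {q : ℕ} {S V T : 𝒰} (u : S ⟶ V) (X Y : A T) (a : Chain (A T) X Y q)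

theorem dSimpFirst_simpHomotopy {kk p : ℕ} (φ : Cpq 𝒜 M (p + 1) q) (σ' : Chain 𝒰 V T p)
    (e₁ : ((cons u (σ'.insId (p - kk))).star 𝒜).obj X = ((cons u σ').star 𝒜).obj X)
    (e₂ : ((cons u (σ'.insId (p - kk))).ast 𝒜).obj Y = ((cons u σ').ast 𝒜).obj Y) :
    dSimpFirst (simpHomotopy kk φ) u σ' X Y a =
      ((-1 : ℤ) ^ (p - kk + 1)) • M.castV e₁ e₂ (dSimpFirst φ u (σ'.insId (p - kk)) X Y a) := by
  unfold dSimpFirst simpHomotopy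
  rw [M.rst_zsmul, M.castV_zsmul, M.actL_zsmul]
  refine (M.castV_zsmul _ _ _ _).trans (congrArg _ (eq_of_heq ?_))
  refine ((M.castV_heq _ _ _).trans ?_).trans
    ((M.castV_heq e₁ e₂ _).trans (M.castV_heq _ _ _)).symm
  refine M.actL_hcongr (by rw [star_insId]) (by rw [comp_insId]) (by rw [comp_insId])
    (by rw [comp_insId σ' (p - kk)]) ?_
  exact (M.castV_heq _ _ _).trans ((M.rst_hcongr u (by rw [star_insId]) (by rw [ast_insId])
    (M.castV_heq _ _ _)).trans (M.castV_heq _ _ _).symm)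

theorem dSimpMid_simpHomotopy_of_lt {kk p : ℕ} (φ : Cpq 𝒜 M (p + 1) q) (σ' : Chain 𝒰 V T p)
    (j : Fin p) (hj : j.val < p - kk)
    (e₁ : ((cons u (σ'.insId (p - kk))).star 𝒜).obj X = ((cons u σ').star 𝒜).obj X)
    (e₂ : ((cons u (σ'.insId (p - kk))).ast 𝒜).obj Y = ((cons u σ').ast 𝒜).obj Y) :
    dSimpMid (simpHomotopy kk φ) u σ' X Y a j =
      ((-1 : ℤ) ^ (p - kk + 1)) •
        M.castV e₁ e₂ (dSimpMid φ u (σ'.insId (p - kk)) X Y a j.castSucc) := by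
  obtain ⟨p, rfl⟩ : ∃ p', p = p' + 1 := ⟨p - 1, by have := j.isLt; omega⟩
  have hdel : ((cons u σ').insId (p + 1 - kk + 1)).del j.val =
      ((cons u σ').del j.val).insId (p + 1 - kk) :=
    del_insId_of_lt (cons u σ') (p + 1 - kk) hj (by omega)
  rw [dSimpMid_eq, dSimpMid_eq, simpHomotopy, M.actR_zsmul, M.castV_zsmul, M.castV_zsmul,
    smul_smul, smul_smul, Fin.val_castSucc, mul_comm]
  refine congrArg (_ • ·) (eq_of_heq ?_)
  refine ((M.castV_heq _ _ _).trans ?_).trans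
    ((M.castV_heq e₁ e₂ _).trans (M.castV_heq _ _ _)).symm
  refine M.actR_hcongr (by rw [hdel, star_insId]) e₁.symm
    (by rw [ast_del, ast_del]; exact e₂.symm)
    (eps_app_insId_heq 𝒜 (cons u σ') (p + 1 - kk) hj (by omega) X).symm ?_
  exact (M.castV_heq _ _ _).trans (φ.apply_hcongr rfl (heq_of_eq hdel.symm) HEq.rfl HEq.rfl HEq.rfl)

theorem dSimpMid_insId_left {p : ℕ} (φ : Cpq 𝒜 M (p + 1 + 1) q) (σ' : Chain 𝒰 V T (p + 1))
    (m : ℕ) (hm : m ≤ p + 1) (j : Fin (p + 1 + 1)) (hj : j.val = m)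
    (e₁ : ((cons u (σ'.insId m)).star 𝒜).obj X = ((cons u σ').star 𝒜).obj X)
    (e₂ : ((cons u (σ'.insId m)).ast 𝒜).obj Y = ((cons u σ').ast 𝒜).obj Y) :
    M.castV e₁ e₂ (dSimpMid φ u (σ'.insId m) X Y a j) =
      ((-1 : ℤ) ^ (m + 1)) • φ S T (cons u σ') X Y a := by
  have hdel : (cons u (σ'.insId m)).del m = cons u σ' := del_insId_succ (cons u σ') m hm
  have hid := idAt_insId (cons u σ') (m + 1) (p + 2 - m) (by omega) (by omega)
  rw [dSimpMid_of_mergesId u X Y a φ (σ'.insId m) j hj (hid.mergesId_left m (by omega))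
    (hdel ▸ e₁.symm) (hdel ▸ e₂.symm)]
  exact eq_of_heq ((M.castV_heq e₁ e₂ _).trans (M.zsmul_hcongr e₁ e₂ _ ((M.castV_heq _ _ _).trans
    (φ.apply_hcongr rfl (heq_of_eq hdel) HEq.rfl HEq.rfl HEq.rfl))))

theorem dSimpMid_insId_right {p : ℕ} (φ : Cpq 𝒜 M (p + 1 + 1) q) (σ' : Chain 𝒰 V T (p + 1))
    (m : ℕ) (hm : m ≤ p) (j : Fin (p + 1 + 1)) (hj : j.val = m + 1)
    (e₁ : ((cons u (σ'.insId m)).star 𝒜).obj X = ((cons u σ').star 𝒜).obj X)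
    (e₂ : ((cons u (σ'.insId m)).ast 𝒜).obj Y = ((cons u σ').ast 𝒜).obj Y) :
    M.castV e₁ e₂ (dSimpMid φ u (σ'.insId m) X Y a j) =
      ((-1 : ℤ) ^ (m + 1 + 1)) • φ S T (cons u σ') X Y a := by
  have hdel : (cons u (σ'.insId m)).del (m + 1) = cons u σ' :=
    del_insId_self (cons u σ') (m + 1) (by omega)
  have hid := idAt_insId (cons u σ') (m + 1) (p + 2 - m) (by omega) (by omega)
  rw [dSimpMid_of_mergesId u X Y a φ (σ'.insId m) j hj
    (hid.mergesId_right (m + 1) (by omega) (by omega)) (hdel ▸ e₁.symm) (hdel ▸ e₂.symm)]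
  exact eq_of_heq ((M.castV_heq e₁ e₂ _).trans (M.zsmul_hcongr e₁ e₂ _ ((M.castV_heq _ _ _).trans
    (φ.apply_hcongr rfl (heq_of_eq hdel) HEq.rfl HEq.rfl HEq.rfl))))

/-- Composing an identity of `σ` with its right neighbour and reinserting it gives back `σ`. -/
theorem dSimpMid_simpHomotopy_of_idAt {kk p : ℕ} (φ : Cpq 𝒜 M (p + 1 + 1) q)
    (σ' : Chain 𝒰 V T (p + 1)) (hkk : kk ≤ p) (hid : (cons u σ').IdAt (kk + 2))
    (j : Fin (p + 1)) (hj : j.val = p - kk) :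
    dSimpMid (simpHomotopy (kk + 1) φ) u σ' X Y a j = φ S T (cons u σ') X Y a := by
  have hins : ((cons u σ').del (p - kk)).insId (p + 1 - (kk + 1)) = cons u σ' := by
    rw [show p + 1 - (kk + 1) = p - kk by omega]
    exact hid.insId_del (p - kk) (by omega)
  have e₁ : (((cons u σ').del (p - kk)).star 𝒜).obj X = ((cons u σ').star 𝒜).obj X := by
    rw [← star_insId 𝒜 _ (p + 1 - (kk + 1)), hins]
  have e₂ : (((cons u σ').del (p - kk)).ast 𝒜).obj Y = ((cons u σ').ast 𝒜).obj Y := by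
    rw [← ast_insId 𝒜 _ (p + 1 - (kk + 1)), hins]
  rw [dSimpMid_of_mergesId u X Y a _ σ' j hj (hid.mergesId_right _ (by omega) (by omega)) e₁ e₂,
    simpHomotopy, M.castV_zsmul, smul_smul, ← pow_add,
    show p + 1 - (kk + 1) + 1 = p - kk + 1 by omega, Even.neg_one_pow ⟨_, rfl⟩, one_smul]
  exact eq_of_heq ((M.castV_heq _ _ _).trans ((M.castV_heq _ _ _).trans
    (φ.apply_hcongr rfl (heq_of_eq hins) HEq.rfl HEq.rfl HEq.rfl)))

theorem dSimpLast_simpHomotopy_zero {p : ℕ} (φ : Cpq 𝒜 M (p + 1) q) (σ' : Chain 𝒰 V T p)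
    (hid : (cons u σ').IdAt 1) :
    dSimpLast (simpHomotopy 0 φ) u σ' X Y a = φ S T (cons u σ') X Y a := by
  obtain ⟨hobj, htw⟩ := 𝒜.twist_hom_app_of_isId (cons u σ').initLast.2.1.comp hid.isId_last Y
  rw [dSimpLast, htw, M.actL_eqToHom, simpHomotopy]
  simp only [M.castV_zsmul, smul_smul, ← pow_add, Nat.sub_zero, Even.neg_one_pow ⟨_, rfl⟩,
    one_smul]
  refine eq_of_heq ?_
  iterate 4 refine (M.castV_heq _ _ _).trans ?_
  exact φ.apply_res_heq_of_isId _ hid.isId_last _ hid.insId_initLast_heq.symm a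

end Homotopy

section Reduction

variable {k : Type u₁} [CommRing k] {𝒰 : Type u₂} [Category.{v₁} 𝒰]
  {A : 𝒰 → Type w₁} [∀ U, Category.{w₂} (A U)] [∀ U, Preadditive (A U)]
  [∀ U, Linear k (A U)] {𝒜 : Prestack k 𝒰 A} {M : Bimodule 𝒜}

open Chain

variable {q : ℕ} {S V T : 𝒰} (u : S ⟶ V) (X Y : A T) (a : Chain (A T) X Y q)

theorem dSimp_simpHomotopy_zero_of_idAt_one {p : ℕ} (φ : Cpq 𝒜 M (p + 1) q)
    (σ' : Chain 𝒰 V T p) (hid : (cons u σ').IdAt 1)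
    (hd : dSimp 𝒜 M φ S T (cons u (σ'.insId p)) X Y a = 0) :
    dSimp 𝒜 M (simpHomotopy 0 φ) S T (cons u σ') X Y a = φ S T (cons u σ') X Y a := by
  have e₁ : ((cons u (σ'.insId (p - 0))).star 𝒜).obj X = ((cons u σ').star 𝒜).obj X :=
    congrArg (fun F => F.obj X) (star_insId 𝒜 (cons u σ') (p - 0 + 1))
  have e₂ : ((cons u (σ'.insId (p - 0))).ast 𝒜).obj Y = ((cons u σ').ast 𝒜).obj Y :=
    congrArg (fun F => F.obj Y) (ast_insId 𝒜 (cons u σ') (p - 0 + 1))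
  have hins : (cons u (σ'.insId p)).IdAt 1 := idAt_insId (cons u σ') (p + 1) 1 le_rfl rfl
  rw [dSimp_cons, Fin.sum_univ_castSucc, ← add_assoc, add_assoc _ (dSimpMid _ _ _ _ _ _ _),
    dSimpMid_add_dSimpLast_eq_zero u X Y a φ _ hins _ rfl, add_zero] at hd
  have hd' : dSimpFirst φ u (σ'.insId (p - 0)) X Y a +
      ∑ j : Fin p, dSimpMid φ u (σ'.insId (p - 0)) X Y a j.castSucc = 0 := hd
  rw [dSimp_cons, dSimpLast_simpHomotopy_zero u X Y a φ σ' hid,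
    dSimpFirst_simpHomotopy u X Y a φ σ' e₁ e₂,
    Finset.sum_congr rfl fun j _ => dSimpMid_simpHomotopy_of_lt u X Y a φ σ' j (by omega) e₁ e₂,
    ← Finset.smul_sum, ← M.castV_sum, ← smul_add, ← M.castV_add, hd', M.castV_zero, smul_zero,
    zero_add]

/-- The faces of `ψ = simpHomotopy (kk + 1) φ` at `σ` match those of `φ` at `σ` with a second
identity inserted right after the identity of `σ`; the one face left over composes the inserted
identity with its right neighbour and gives `-φ^σ`. -/
theorem sum_dSimpMid_simpHomotopy_succ {kk p : ℕ} (φ : Cpq 𝒜 M (p + 1 + 1) q)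
    (σ' : Chain 𝒰 V T (p + 1)) (hkk : kk ≤ p) (hid : (cons u σ').IdAt (kk + 2))
    (hφ : RightReduced 𝒜 M (kk + 1) φ)
    (e₁ : ((cons u (σ'.insId (p + 1 - (kk + 1)))).star 𝒜).obj X = ((cons u σ').star 𝒜).obj X)
    (e₂ : ((cons u (σ'.insId (p + 1 - (kk + 1)))).ast 𝒜).obj Y = ((cons u σ').ast 𝒜).obj Y) :
    ∑ j, dSimpMid (simpHomotopy (kk + 1) φ) u σ' X Y a j =
      ((-1 : ℤ) ^ (p + 1 - (kk + 1) + 1)) •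
          M.castV e₁ e₂ (∑ j, dSimpMid φ u (σ'.insId (p + 1 - (kk + 1))) X Y a j) +
        φ S T (cons u σ') X Y a := by
  have hψ := simpHomotopy_rightReduced hφ (by omega)
  have hins : (cons u (σ'.insId (p + 1 - (kk + 1)))).IdAt (kk + 2) :=
    idAt_insId (cons u σ') (p + 1 - (kk + 1) + 1) (kk + 2) (by omega) (by omega)
  have hright : ((-1 : ℤ) ^ (p + 1 - (kk + 1) + 1)) • M.castV e₁ e₂
      (dSimpMid φ u (σ'.insId (p + 1 - (kk + 1))) X Y a ⟨p - kk + 1, by omega⟩) =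
      -φ S T (cons u σ') X Y a := by
    rw [dSimpMid_insId_right u X Y a φ σ' _ (by omega) _ (by simp only; omega),
      pow_succ (-1 : ℤ) (p + 1 - (kk + 1) + 1), mul_neg_one, neg_smul, smul_neg,
      neg_one_pow_smul_neg_one_pow_smul]
  rw [M.castV_sum, Finset.smul_sum, ← sub_neg_eq_add, ← hright]
  refine sum_eq_sum_castSucc_sub (fun d => dSimpMid (simpHomotopy (kk + 1) φ) u σ' X Y a d)
    (fun e => ((-1 : ℤ) ^ (p + 1 - (kk + 1) + 1)) •
      M.castV e₁ e₂ (dSimpMid φ u (σ'.insId (p + 1 - (kk + 1))) X Y a e))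
    ⟨p - kk + 1, by omega⟩ (fun d hne => ?_) (fun d heq => ?_) (fun e hlt => ?_)
  · have hne : d.val ≠ p - kk + 1 := fun h => hne (Fin.ext h)
    rcases lt_trichotomy d.val (p - kk) with hlt | heq | hgt
    · exact dSimpMid_simpHomotopy_of_lt u X Y a φ σ' d (by omega) e₁ e₂
    · rw [dSimpMid_simpHomotopy_of_idAt u X Y a φ σ' hkk hid d heq,
        dSimpMid_insId_left u X Y a φ σ' _ (by omega) _ (by simp only [Fin.val_castSucc]; omega),
        neg_one_pow_smul_neg_one_pow_smul]
    · rw [dSimpMid_eq_zero u X Y a _ σ' d (hψ _ _ _ ((hid.del_right d.val (by omega)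
        (by omega)).rightDeg le_rfl) _ _ _), dSimpMid_eq_zero u X Y a φ _ _ (hφ _ _ _
        ((hins.del_right _ (by simp only [Fin.val_castSucc]; omega)
          (by simp only [Fin.val_castSucc]; omega)).rightDeg le_rfl) _ _ _),
        M.castV_zero, smul_zero]
  · have heq : d.val = p - kk + 1 := congrArg Fin.val heq
    exact dSimpMid_eq_zero u X Y a _ σ' d (hψ _ _ _ ((hid.del_right d.val (by omega)
      (by omega)).rightDeg le_rfl) _ _ _)
  · have hlt : p - kk + 1 < e.val := hlt
    rw [dSimpMid_eq_zero u X Y a φ _ e (hφ _ _ _ ((hins.del_right e.val (by omega)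
      (by omega)).rightDeg le_rfl) _ _ _), M.castV_zero, smul_zero]

theorem dSimp_simpHomotopy_succ_of_idAt {kk p : ℕ} (φ : Cpq 𝒜 M (p + 1 + 1) q)
    (σ' : Chain 𝒰 V T (p + 1)) (hkk : kk ≤ p) (hid : (cons u σ').IdAt (kk + 2))
    (hφ : RightReduced 𝒜 M (kk + 1) φ)
    (hd : dSimp 𝒜 M φ S T (cons u (σ'.insId (p + 1 - (kk + 1)))) X Y a = 0) :
    dSimp 𝒜 M (simpHomotopy (kk + 1) φ) S T (cons u σ') X Y a = φ S T (cons u σ') X Y a := by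
  have e₁ : ((cons u (σ'.insId (p + 1 - (kk + 1)))).star 𝒜).obj X =
      ((cons u σ').star 𝒜).obj X :=
    congrArg (fun F => F.obj X) (star_insId 𝒜 (cons u σ') (p + 1 - (kk + 1) + 1))
  have e₂ : ((cons u (σ'.insId (p + 1 - (kk + 1)))).ast 𝒜).obj Y =
      ((cons u σ').ast 𝒜).obj Y :=
    congrArg (fun F => F.obj Y) (ast_insId 𝒜 (cons u σ') (p + 1 - (kk + 1) + 1))
  have hins : (cons u (σ'.insId (p + 1 - (kk + 1)))).IdAt (kk + 2) :=
    idAt_insId (cons u σ') (p + 1 - (kk + 1) + 1) (kk + 2) (by omega) (by omega)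
  have hψ := simpHomotopy_rightReduced hφ (by omega)
  rw [dSimp_cons, dSimpLast_eq_zero u X Y a φ _
    (hφ _ _ _ (hins.initLast.rightDeg le_rfl) _ _ _), add_zero] at hd
  rw [dSimp_cons, dSimpLast_eq_zero u X Y a _ σ' (hψ _ _ _ (hid.initLast.rightDeg le_rfl) _ _ _),
    add_zero, dSimpFirst_simpHomotopy u X Y a φ σ' e₁ e₂,
    sum_dSimpMid_simpHomotopy_succ u X Y a φ σ' hkk hid hφ e₁ e₂, ← add_assoc, ← smul_add,
    ← M.castV_add, hd, M.castV_zero, smul_zero, zero_add]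

theorem dSimp_simpHomotopy_of_idAt {kk p : ℕ} {φ : Cpq 𝒜 M (p + 1) q}
    (hφ : RightReduced 𝒜 M kk φ) (hd : RightReduced 𝒜 M (kk + 1) (dSimp 𝒜 M φ)) (hkk : kk ≤ p)
    {S T : 𝒰} (σ : Chain 𝒰 S T (p + 1)) (hid : σ.IdAt (kk + 1)) (X Y : A T)
    (a : Chain (A T) X Y q) :
    dSimp 𝒜 M (simpHomotopy kk φ) S T σ X Y a = φ S T σ X Y a := by
  match σ, hid with
  | .cons u σ', hid =>
    have hins : (cons u (σ'.insId (p - kk))).IdAt (kk + 1) :=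
      idAt_insId (cons u σ') (p - kk + 1) (kk + 1) (by omega) (by omega)
    have hd' := hd S T _ (hins.rightDeg le_rfl) X Y a
    cases kk with
    | zero => exact dSimp_simpHomotopy_zero_of_idAt_one u X Y a φ σ' hid hd'
    | succ kk =>
      obtain ⟨p, rfl⟩ : ∃ p', p = p' + 1 := ⟨p - 1, by omega⟩
      exact dSimp_simpHomotopy_succ_of_idAt u X Y a φ σ' (by omega) hid hφ hd'

end Reduction

open CategoryTheory in
/-- **Statement 12.** Let `φ ∈ C̄^{p+1,q}(𝒜,M)` be a right `k`-reduced normalized cochain.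
If `d_simp φ ∈ C̄^{p+2,q}(𝒜,M)` is right `(k+1)`-reduced, then there exists a right
`k`-reduced normalized cochain `ψ ∈ C̄^{p,q}(𝒜,M)` with `φ − d_simp ψ` right
`(k+1)`-reduced. -/
theorem simp_reduction
    {k : Type u₁} [CommRing k] {𝒰 : Type u₂} [Category.{v₁} 𝒰]
    {A : 𝒰 → Type w₁} [∀ U, Category.{w₂} (A U)] [∀ U, Preadditive (A U)]
    [∀ U, Linear k (A U)] (𝒜 : Prestack k 𝒰 A) (M : Bimodule 𝒜)
    (kk p q : ℕ) (φ : Cpq 𝒜 M (p + 1) q)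
    (hn : Normalized 𝒜 M φ) (hr : RightReduced 𝒜 M kk φ)
    (hd : RightReduced 𝒜 M (kk + 1) (dSimp 𝒜 M φ)) :
    ∃ ψ : Cpq 𝒜 M p q, Normalized 𝒜 M ψ ∧ RightReduced 𝒜 M kk ψ ∧
      RightReduced 𝒜 M (kk + 1) (φ - dSimp 𝒜 M ψ) := by
  by_cases hkp : kk ≤ p
  · have hψ := simpHomotopy_rightReduced hr hkp
    refine ⟨simpHomotopy kk φ, simpHomotopy_normalized hn, hψ, fun S T σ hσ X Y a => ?_⟩
    change φ S T σ X Y a - dSimp 𝒜 M (simpHomotopy kk φ) S T σ X Y a = 0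
    obtain ⟨c, hc, hid⟩ := hσ.exists_idAt
    rcases Nat.lt_or_ge c (kk + 1) with hlt | hge
    · rw [hr S T σ (hid.rightDeg (by omega)) X Y a,
        hψ.dSimp hkp S T σ (hid.rightDeg (by omega)) X Y a, sub_zero]
    · obtain rfl : c = kk + 1 := by omega
      rw [dSimp_simpHomotopy_of_idAt hr hd hkp σ hid X Y a, sub_self]
  · refine ⟨0, fun _ _ _ _ _ _ _ => rfl, fun _ _ _ _ _ _ _ => rfl, fun S T σ hσ X Y a => ?_⟩
    obtain ⟨c, hc, hid⟩ := hσ.exists_idAt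
    change φ S T σ X Y a - dSimp 𝒜 M 0 S T σ X Y a = 0
    rw [dSimp_zero, hr S T σ (hid.rightDeg (by have := hid.le_length; omega)) X Y a]
    exact sub_zero _
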